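/- arXiv:2502.07977 — 10 statements merged into one kernel-verified Lean document; each statement's English description precedes it below -/
import Mathlib

section
/- Let p ≥ 1 and let Q(1), Q(2), …, Q(p) be row stochastic M×M real matrices. Then δ(Q(1)·Q(2)·⋯·Q(p)) ≤ ∏_{i=1}^{p} λ(Q(i)). -/
/-- A square real matrix is row stochastic if all its entries are nonnegative and
each of its rows sums to 1. -/
def RowStochastic {M : ℕ} (A : Matrix (Fin M) (Fin M) ℝ) : Prop :=
  (∀ i j, 0 ≤ A i j) ∧ ∀ i, ∑ j, A i j = 1

/-- Coefficient of ergodicity `δ(A) = max_j max_{i₁,i₂} |A_{i₁ j} − A_{i₂ j}|`. -/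
noncomputable def ergDelta {M : ℕ} (A : Matrix (Fin M) (Fin M) ℝ) : ℝ :=
  ⨆ j, ⨆ i₁, ⨆ i₂, |A i₁ j - A i₂ j|

/-- Coefficient of ergodicity `λ(A) = 1 − min_{i₁,i₂} ∑_j min(A_{i₁ j}, A_{i₂ j})`. -/
noncomputable def ergLambda {M : ℕ} (A : Matrix (Fin M) (Fin M) ℝ) : ℝ :=
  1 - ⨅ i₁, ⨅ i₂, ∑ j, min (A i₁ j) (A i₂ j)

/-!
For two rows `i₁, i₂` of a row stochastic `A`, the difference `d = A i₁ - A i₂` has total mass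
zero and positive mass `∑ₖ (d k)⁺ = 1 - ∑ₖ min (A i₁ k) (A i₂ k) ≤ λ(A)`. Pairing such a vector
with a column of `B`, whose entries oscillate by at most `δ(B)`, gives at most `λ(A) δ(B)`; hence
`δ(A B) ≤ λ(A) δ(B)`, and the theorem follows by induction from `δ(1) ≤ 1`.
-/

open Finset

theorem sum_mul_le_sum_posPart_mul {ι : Type*} [Fintype ι] {d g : ι → ℝ} {c : ℝ}
    (hd : ∑ k, d k = 0) (hg : ∀ k₁ k₂, g k₁ - g k₂ ≤ c) :
    ∑ k, d k * g k ≤ (∑ k, (d k)⁺) * c := by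
  rcases isEmpty_or_nonempty ι with _ | _
  · simp
  obtain ⟨k₀, hk₀⟩ := Finite.exists_min g
  have hshift : ∑ k, d k * g k = ∑ k, d k * (g k - g k₀) := by
    simp only [mul_sub, sum_sub_distrib, ← sum_mul, hd, zero_mul, sub_zero]
  rw [hshift, sum_mul]
  refine sum_le_sum fun k _ => ?_
  have hgk : 0 ≤ g k - g k₀ := sub_nonneg.2 (hk₀ k)
  calc d k * (g k - g k₀) ≤ (d k)⁺ * (g k - g k₀) :=
        mul_le_mul_of_nonneg_right (le_posPart _) hgk
    _ ≤ (d k)⁺ * c := mul_le_mul_of_nonneg_left (hg k k₀) (posPart_nonneg _)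

variable {M : ℕ}

theorem RowStochastic.one : RowStochastic (1 : Matrix (Fin M) (Fin M) ℝ) :=
  ⟨fun i j => by by_cases h : i = j <;> simp [Matrix.one_apply, h],
    fun i => by simp [Matrix.one_apply]⟩

theorem RowStochastic.le_one {A : Matrix (Fin M) (Fin M) ℝ} (hA : RowStochastic A) (i j : Fin M) :
    A i j ≤ 1 :=
  hA.2 i ▸ single_le_sum (fun k _ => hA.1 i k) (mem_univ j)

theorem RowStochastic.sum_posPart_sub_eq_one_sub_sum_min {A : Matrix (Fin M) (Fin M) ℝ} (hA : RowStochastic A)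
    (i₁ i₂ : Fin M) :
    ∑ k, (A i₁ k - A i₂ k)⁺ = 1 - ∑ k, min (A i₁ k) (A i₂ k) := by
  have hpos : ∀ a b : ℝ, (a - b)⁺ = a - min a b := fun a b => by
    rcases le_total a b with h | h <;> simp [h]
  simp only [hpos, sum_sub_distrib, hA.2]

theorem le_ergDelta (A : Matrix (Fin M) (Fin M) ℝ) (j i₁ i₂ : Fin M) :
    |A i₁ j - A i₂ j| ≤ ergDelta A :=
  le_ciSup_of_le (Set.finite_range _).bddAbove j <|
    le_ciSup_of_le (Set.finite_range _).bddAbove i₁ <|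
      le_ciSup (f := fun i => |A i₁ j - A i j|) (Set.finite_range _).bddAbove i₂

theorem ergDelta_le {A : Matrix (Fin M) (Fin M) ℝ} {c : ℝ} (hc : 0 ≤ c)
    (h : ∀ j i₁ i₂, |A i₁ j - A i₂ j| ≤ c) : ergDelta A ≤ c :=
  Real.iSup_le (fun j => Real.iSup_le (fun i₁ => Real.iSup_le (h j i₁) hc) hc) hc

theorem ergDelta_nonneg (A : Matrix (Fin M) (Fin M) ℝ) : 0 ≤ ergDelta A :=
  Real.iSup_nonneg fun _ => Real.iSup_nonneg fun _ => Real.iSup_nonneg fun _ => abs_nonneg _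

theorem RowStochastic.ergDelta_le_one {A : Matrix (Fin M) (Fin M) ℝ} (hA : RowStochastic A) :
    ergDelta A ≤ 1 :=
  ergDelta_le zero_le_one fun j i₁ i₂ => abs_sub_le_iff.2
    ⟨by linarith [hA.le_one i₁ j, hA.1 i₂ j], by linarith [hA.le_one i₂ j, hA.1 i₁ j]⟩

theorem one_sub_sum_min_le_ergLambda (A : Matrix (Fin M) (Fin M) ℝ) (i₁ i₂ : Fin M) :
    1 - ∑ j, min (A i₁ j) (A i₂ j) ≤ ergLambda A :=
  sub_le_sub_left (ciInf_le_of_le (Set.finite_range _).bddBelow i₁ <|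
    ciInf_le (Set.finite_range _).bddBelow i₂) 1

theorem RowStochastic.ergLambda_nonneg {A : Matrix (Fin M) (Fin M) ℝ} (hA : RowStochastic A) :
    0 ≤ ergLambda A := by
  rcases isEmpty_or_nonempty (Fin M) with _ | ⟨⟨i⟩⟩
  · simp [ergLambda, Real.iInf_of_isEmpty]
  · simpa [hA.2] using one_sub_sum_min_le_ergLambda A i i

theorem RowStochastic.ergDelta_mul_le {A : Matrix (Fin M) (Fin M) ℝ} (hA : RowStochastic A)
    (B : Matrix (Fin M) (Fin M) ℝ) : ergDelta (A * B) ≤ ergLambda A * ergDelta B := by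
  have hB := ergDelta_nonneg B
  have key : ∀ j a b, (A * B) a j - (A * B) b j ≤ ergLambda A * ergDelta B := fun j a b =>
    calc (A * B) a j - (A * B) b j = ∑ k, (A a k - A b k) * B k j := by
          simp only [Matrix.mul_apply, sub_mul, sum_sub_distrib]
      _ ≤ (∑ k, (A a k - A b k)⁺) * ergDelta B :=
          sum_mul_le_sum_posPart_mul (by simp only [sum_sub_distrib, hA.2, sub_self])
            fun k₁ k₂ => (le_abs_self _).trans (le_ergDelta B j k₁ k₂)
      _ ≤ ergLambda A * ergDelta B := by
          rw [hA.sum_posPart_sub_eq_one_sub_sum_min]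
          exact mul_le_mul_of_nonneg_right (one_sub_sum_min_le_ergLambda A a b) hB
  exact ergDelta_le (mul_nonneg hA.ergLambda_nonneg hB) fun j i₁ i₂ =>
    abs_sub_le_iff.2 ⟨key j i₁ i₂, key j i₂ i₁⟩

theorem ergDelta_list_prod_le {L : List (Matrix (Fin M) (Fin M) ℝ)}
    (hL : ∀ A ∈ L, RowStochastic A) : ergDelta L.prod ≤ (L.map ergLambda).prod := by
  induction L with
  | nil => simpa using RowStochastic.one.ergDelta_le_one
  | cons A L ih =>
    have hA := hL A List.mem_cons_self
    rw [List.prod_cons, List.map_cons, List.prod_cons]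
    calc ergDelta (A * L.prod) ≤ ergLambda A * ergDelta L.prod := hA.ergDelta_mul_le _
      _ ≤ ergLambda A * (L.map ergLambda).prod :=
          mul_le_mul_of_nonneg_left (ih fun B hB => hL B (List.mem_cons_of_mem A hB))
            hA.ergLambda_nonneg

theorem ergDelta_prod_le_prod_ergLambda_general {M p : ℕ}
    (Q : Fin p → Matrix (Fin M) (Fin M) ℝ) (hQ : ∀ i, RowStochastic (Q i)) :
    ergDelta (List.ofFn Q).prod ≤ ∏ i, ergLambda (Q i) := by
  simpa [List.map_ofFn, List.prod_ofFn] using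
    ergDelta_list_prod_le (List.forall_mem_ofFn_iff.2 hQ)

/-- Hajnal's inequality: for row stochastic matrices `Q(1), …, Q(p)` (p ≥ 1),
`δ(Q(1)·Q(2)·⋯·Q(p)) ≤ ∏_{i=1}^p λ(Q(i))`. -/
theorem ergDelta_prod_le_prod_ergLambda {M p : ℕ} (hM : 0 < M) (hp : 1 ≤ p)
    (Q : Fin p → Matrix (Fin M) (Fin M) ℝ) (hQ : ∀ i, RowStochastic (Q i)) :
    ergDelta (List.ofFn Q).prod ≤ ∏ i, ergLambda (Q i) :=
  ergDelta_prod_le_prod_ergLambda_general Q hQ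
end

section
/- Let 𝒯 be a finite set of τ ≥ 1 matrices, each an M×M real matrix with all entries nonnegative and all diagonal entries positive, and such that for every H ∈ 𝒯 the power H^M has some column with all entries positive. Then for every sequence H(1), …, H(τM) of τM matrices drawn from 𝒯 (repetitions allowed, in any order), the product H(τM)·H(τM−1)·⋯·H(1) has some column with all entries positive. -/
/-!
Multiplying by a nonnegative matrix with positive diagonal never destroys a positive entry, since
`(A * B) j i ≥ A j j * B j i`. Hence every positive entry of the product of a sublist of such
matrices is positive in the product of the whole list. By pigeonhole some `H ∈ 𝒯` occurs at least
`M` times among the `τ * M` factors, so `H ^ M` is the product of a sublist, and its positive column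
survives in the full product.
-/

open Matrix

section PositiveEntries

variable {n R : Type*} [Fintype n] [Semiring R] [LinearOrder R]
  [IsStrictOrderedRing R]

theorem Matrix.list_prod_apply_nonneg [DecidableEq n] {L : List (Matrix n n R)}
    (hL : ∀ A ∈ L, ∀ i j, 0 ≤ A i j) (i j : n) : 0 ≤ L.prod i j := by
  induction L generalizing i with
  | nil => simp [one_apply, apply_ite]
  | cons A L ih =>
    rw [List.prod_cons, mul_apply]
    exact Finset.sum_nonneg fun k _ =>
      mul_nonneg (hL A List.mem_cons_self i k) (ih (fun B hB => hL B (.tail _ hB)) k)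

theorem Matrix.mul_apply_pos {A B : Matrix n n R} (hA : ∀ i j, 0 ≤ A i j)
    (hB : ∀ i j, 0 ≤ B i j) {i j : n} (k : n) (hik : 0 < A i k) (hkj : 0 < B k j) :
    0 < (A * B) i j := by
  rw [mul_apply]
  exact Finset.sum_pos' (fun l _ => mul_nonneg (hA i l) (hB l j))
    ⟨k, Finset.mem_univ k, mul_pos hik hkj⟩

theorem Matrix.exists_pos_of_mul_apply_pos {A B : Matrix n n R} (hA : ∀ i j, 0 ≤ A i j)
    {i j : n} (h : 0 < (A * B) i j) :
    ∃ k, 0 < A i k ∧ 0 < B k j := by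
  rw [mul_apply] at h
  obtain ⟨k, -, hk⟩ := Finset.exists_lt_of_sum_lt (f := fun _ => (0 : R)) (by simpa using h)
  refine ⟨k, (pos_and_pos_or_neg_and_neg_of_mul_pos hk).resolve_right ?_⟩
  exact fun hneg => (hA i k).not_gt hneg.1

theorem List.Sublist.prod_apply_pos [DecidableEq n] {L₁ L₂ : List (Matrix n n R)}
    (hsub : L₁.Sublist L₂)
    (hnn : ∀ A ∈ L₂, ∀ i j, 0 ≤ A i j) (hdiag : ∀ A ∈ L₂, ∀ i, 0 < A i i) {i j : n}
    (h : 0 < L₁.prod i j) : 0 < L₂.prod i j := by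
  induction hsub generalizing i with
  | slnil => exact h
  | cons A _ ih =>
    rw [List.prod_cons]
    exact mul_apply_pos (hnn A List.mem_cons_self)
      (list_prod_apply_nonneg fun B hB => hnn B (.tail _ hB)) i
      (hdiag A List.mem_cons_self i)
      (ih (fun B hB => hnn B (.tail _ hB)) (fun B hB => hdiag B (.tail _ hB)) h)
  | @cons_cons _ l₂ A _ ih =>
    have hA := hnn A List.mem_cons_self
    have hnn₂ : ∀ B ∈ l₂, ∀ i j, 0 ≤ B i j := fun B hB => hnn B (.tail _ hB)
    rw [List.prod_cons] at h ⊢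
    obtain ⟨k, hik, hkj⟩ := exists_pos_of_mul_apply_pos hA h
    exact mul_apply_pos hA (list_prod_apply_nonneg hnn₂) k hik
      (ih hnn₂ (fun B hB => hdiag B (.tail _ hB)) hkj)

end PositiveEntries

theorem List.exists_le_count_of_card_mul_le_length {α : Type*} [DecidableEq α] {L : List α}
    {s : Finset α} (hs : s.Nonempty) (hL : ∀ a ∈ L, a ∈ s) {m : ℕ}
    (hlen : s.card * m ≤ L.length) : ∃ a ∈ s, m ≤ L.count a := by
  refine Finset.exists_le_of_sum_le hs ?_
  have hsum : ∑ a ∈ s, L.count a = L.length := by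
    simpa using Multiset.sum_count_eq_card (s := s) (m := ↑L) (by simpa using hL)
  simpa [hsum] using hlen

theorem prod_has_positive_column_general {M τ : ℕ} (hτ : 1 ≤ τ)
    (T : Finset (Matrix (Fin M) (Fin M) ℝ)) (hcard : T.card = τ)
    (hnn : ∀ H ∈ T, ∀ i j, (0:ℝ) ≤ H i j)
    (hdiag : ∀ H ∈ T, ∀ i, (0:ℝ) < H i i)
    (hcol : ∀ H ∈ T, ∃ i, ∀ j, (0:ℝ) < (H ^ M) j i)
    (Hs : Fin (τ * M) → Matrix (Fin M) (Fin M) ℝ) (hmem : ∀ t, Hs t ∈ T) :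
    ∃ i, ∀ j, (0:ℝ) < ((List.ofFn Hs).reverse.prod) j i := by
  set L := (List.ofFn Hs).reverse
  have hLT : ∀ A ∈ L, A ∈ T := by
    simp only [L, List.mem_reverse, List.mem_ofFn, forall_exists_index]
    rintro _ t rfl
    exact hmem t
  obtain ⟨H, hHT, hHcount⟩ : ∃ H ∈ T, M ≤ L.count H :=
    List.exists_le_count_of_card_mul_le_length (Finset.card_pos.mp (hcard ▸ hτ)) hLT
      (by simp [L, hcard])
  have hsub : (List.replicate M H).Sublist L := List.replicate_sublist_iff.mpr hHcount
  obtain ⟨i, hi⟩ := hcol H hHT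
  refine ⟨i, fun j => hsub.prod_apply_pos (fun A hA => hnn A (hLT A hA))
    (fun A hA => hdiag A (hLT A hA)) ?_⟩
  simpa [List.prod_replicate] using hi j

/-- Let `𝒯` be a finite set of `τ ≥ 1` matrices, each `M×M` with nonnegative entries
and positive diagonal entries, and such that for every `H ∈ 𝒯` the power `H^M` has
a column with all entries positive. Then for every sequence of `τ·M` matrices drawn
from `𝒯` (repetitions allowed, in any order), the backward product
`H(τM)·H(τM−1)·⋯·H(1)` has some column with all entries positive. -/
theorem prod_has_positive_column {M τ : ℕ} (hM : 0 < M) (hτ : 1 ≤ τ)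
    (T : Finset (Matrix (Fin M) (Fin M) ℝ)) (hcard : T.card = τ)
    (hnn : ∀ H ∈ T, ∀ i j, (0:ℝ) ≤ H i j)
    (hdiag : ∀ H ∈ T, ∀ i, (0:ℝ) < H i i)
    (hcol : ∀ H ∈ T, ∃ i, ∀ j, (0:ℝ) < (H ^ M) j i)
    (Hs : Fin (τ * M) → Matrix (Fin M) (Fin M) ℝ) (hmem : ∀ t, Hs t ∈ T) :
    ∃ i, ∀ j, (0:ℝ) < ((List.ofFn Hs).reverse.prod) j i :=
  prod_has_positive_column_general hτ T hcard hnn hdiag hcol Hs hmem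
end

section
/- Let β ∈ (0,1], let Y(1), …, Y(p) be row stochastic M×M real matrices, and let H(1), …, H(p) be M×M matrices with entries in {0,1} such that β·H(t) ≤ Y(t) entrywise for every t. If the product H(p)·H(p−1)·⋯·H(1) has a column all of whose entries are at least 1, then the row stochastic matrix Q := Y(p)·Y(p−1)·⋯·Y(1) satisfies λ(Q) ≤ 1 − β^p; in particular Q is a scrambling matrix. -/
/-!
The matrices `H(t)` are nonnegative with `β • H(t) ≤ Y(t)` entrywise, and products of
nonnegative matrices are entrywise monotone in each factor. Hence `β^p • H(p)⋯H(1) ≤ Q`,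
so the column `i₀` of `Q` has all entries at least `β^p`. Any two rows of `Q` then overlap
by at least `β^p` in that column alone, which bounds `λ(Q)` by `1 - β^p`.
-/

namespace Matrix

section OrderedSemiring

variable {l m n ι R : Type*} [Semiring R] [PartialOrder R] [IsOrderedRing R]

theorem mul_apply_nonneg [Fintype m] {A : Matrix l m R} {B : Matrix m n R}
    (hA : ∀ i j, 0 ≤ A i j) (hB : ∀ i j, 0 ≤ B i j) (i : l) (j : n) : 0 ≤ (A * B) i j :=
  Finset.sum_nonneg fun k _ => mul_nonneg (hA i k) (hB k j)

theorem mul_apply_le_mul_apply [Fintype m] {A A' : Matrix l m R} {B B' : Matrix m n R}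
    (hA : ∀ i j, 0 ≤ A i j) (hAA' : ∀ i j, A i j ≤ A' i j)
    (hB : ∀ i j, 0 ≤ B i j) (hBB' : ∀ i j, B i j ≤ B' i j) (i : l) (j : n) :
    (A * B) i j ≤ (A' * B') i j :=
  Finset.sum_le_sum fun k _ =>
    mul_le_mul (hAA' i k) (hBB' k j) (hB k j) ((hA i k).trans (hAA' i k))

theorem one_apply_nonneg [DecidableEq n] (i j : n) : 0 ≤ (1 : Matrix n n R) i j := by
  rw [one_apply]
  split_ifs
  exacts [zero_le_one, le_rfl]

theorem list_prod_apply_nonneg_s4 [Fintype n] [DecidableEq n] {L : List (Matrix n n R)}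
    (hL : ∀ A ∈ L, ∀ i j, 0 ≤ A i j) (i j : n) : 0 ≤ L.prod i j := by
  induction L generalizing i j with
  | nil => exact one_apply_nonneg i j
  | cons A L ih =>
    rw [List.forall_mem_cons] at hL
    exact mul_apply_nonneg hL.1 (ih hL.2) i j

theorem list_prod_map_apply_le [Fintype n] [DecidableEq n] {L : List ι}
    {F G : ι → Matrix n n R}
    (hF : ∀ t ∈ L, ∀ i j, 0 ≤ F t i j) (hFG : ∀ t ∈ L, ∀ i j, F t i j ≤ G t i j)
    (i j : n) : (L.map F).prod i j ≤ (L.map G).prod i j := by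
  induction L generalizing i j with
  | nil => exact le_rfl
  | cons t L ih =>
    rw [List.forall_mem_cons] at hF hFG
    have hFL : ∀ A ∈ L.map F, ∀ i j, 0 ≤ A i j := by
      simpa only [List.forall_mem_map] using hF.2
    exact mul_apply_le_mul_apply hF.1 hFG.1 (list_prod_apply_nonneg_s4 hFL) (ih hF.2 hFG.2) i j

end OrderedSemiring

theorem pow_length_mul_list_prod_map_apply_le {n ι R : Type*} [Fintype n] [DecidableEq n]
    [CommSemiring R] [PartialOrder R] [IsOrderedRing R] {c : R} (hc : 0 ≤ c)
    {L : List ι} {H Y : ι → Matrix n n R}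
    (hH : ∀ t ∈ L, ∀ i j, 0 ≤ H t i j) (hHY : ∀ t ∈ L, ∀ i j, c * H t i j ≤ Y t i j)
    (i j : n) : c ^ L.length * (L.map H).prod i j ≤ (L.map Y).prod i j := by
  have hscaled : (L.map fun t => c • H t).prod = c ^ L.length • (L.map H).prod := by
    rw [← List.length_map H, List.smul_prod, List.map_map]
    rfl
  rw [← smul_eq_mul, ← smul_apply, ← hscaled]
  exact list_prod_map_apply_le (fun t ht i j => mul_nonneg hc (hH t ht i j)) hHY i j

end Matrix

theorem ergLambda_le_one_sub_of_le_col {M : ℕ} {A : Matrix (Fin M) (Fin M) ℝ}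
    (hA : ∀ i j, 0 ≤ A i j) {c : ℝ} (i₀ : Fin M) (hcol : ∀ j, c ≤ A j i₀) :
    ergLambda A ≤ 1 - c := by
  have : Nonempty (Fin M) := ⟨i₀⟩
  have hoverlap : ∀ i₁ i₂, c ≤ ∑ j, min (A i₁ j) (A i₂ j) := fun i₁ i₂ =>
    calc c ≤ min (A i₁ i₀) (A i₂ i₀) := le_min (hcol i₁) (hcol i₂)
      _ ≤ ∑ j, min (A i₁ j) (A i₂ j) :=
        Finset.single_le_sum (fun j _ => le_min (hA i₁ j) (hA i₂ j)) (Finset.mem_univ i₀)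
  have hinf : c ≤ ⨅ i₁, ⨅ i₂, ∑ j, min (A i₁ j) (A i₂ j) :=
    le_ciInf fun i₁ => le_ciInf fun i₂ => hoverlap i₁ i₂
  rw [ergLambda]
  linarith

theorem ergLambda_prod_le_of_dominating_general {M p : ℕ}
    (β : ℝ) (hβ0 : 0 < β)
    (Y H : Fin p → Matrix (Fin M) (Fin M) ℝ)
    (hH01 : ∀ t i j, H t i j = 0 ∨ H t i j = 1)
    (hle : ∀ t i j, β * H t i j ≤ Y t i j)
    (i₀ : Fin M) (hcol : ∀ j, (1:ℝ) ≤ ((List.ofFn H).reverse.prod) j i₀) :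
    ergLambda ((List.ofFn Y).reverse.prod) ≤ 1 - β ^ p ∧
      ergLambda ((List.ofFn Y).reverse.prod) < 1 := by
  have hH : ∀ t i j, 0 ≤ H t i j := fun t i j => by
    rcases hH01 t i j with h | h <;> simp [h]
  have hY : ∀ t i j, 0 ≤ Y t i j := fun t i j =>
    (mul_nonneg hβ0.le (hH t i j)).trans (hle t i j)
  simp only [List.ofFn_eq_map, ← List.map_reverse] at hcol ⊢
  set L := (List.finRange p).reverse
  have hQ : ∀ i j, 0 ≤ (L.map Y).prod i j :=
    Matrix.list_prod_apply_nonneg_s4 (by simpa only [List.forall_mem_map] using fun t _ => hY t)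
  have hQcol : ∀ j, β ^ p ≤ (L.map Y).prod j i₀ := fun j =>
    calc β ^ p ≤ β ^ L.length * (L.map H).prod j i₀ := by
          simpa [L] using mul_le_mul_of_nonneg_left (hcol j) (pow_nonneg hβ0.le p)
      _ ≤ (L.map Y).prod j i₀ :=
          Matrix.pow_length_mul_list_prod_map_apply_le hβ0.le (fun t _ => hH t)
            (fun t _ => hle t) j i₀
  have hbound := ergLambda_le_one_sub_of_le_col hQ i₀ hQcol
  exact ⟨hbound, hbound.trans_lt (sub_lt_self 1 (pow_pos hβ0 p))⟩

/-- Let `β ∈ (0,1]`, let `Y(1), …, Y(p)` be row stochastic matrices and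
`H(1), …, H(p)` be `{0,1}`-matrices with `β·H(t) ≤ Y(t)` entrywise. If the backward
product `H(p)·⋯·H(1)` has a column all of whose entries are at least `1`, then the
backward product `Q := Y(p)·⋯·Y(1)` satisfies `λ(Q) ≤ 1 − β^p`; in particular `Q`
is scrambling (`λ(Q) < 1`). -/
theorem ergLambda_prod_le_of_dominating {M p : ℕ} (hM : 0 < M) (hp : 1 ≤ p)
    (β : ℝ) (hβ0 : 0 < β) (hβ1 : β ≤ 1)
    (Y H : Fin p → Matrix (Fin M) (Fin M) ℝ)
    (hY : ∀ t, RowStochastic (Y t))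
    (hH01 : ∀ t i j, H t i j = 0 ∨ H t i j = 1)
    (hle : ∀ t i j, β * H t i j ≤ Y t i j)
    (i₀ : Fin M) (hcol : ∀ j, (1:ℝ) ≤ ((List.ofFn H).reverse.prod) j i₀) :
    ergLambda ((List.ofFn Y).reverse.prod) ≤ 1 - β ^ p ∧
      ergLambda ((List.ofFn Y).reverse.prod) < 1 :=
  ergLambda_prod_le_of_dominating_general β hβ0 Y H hH01 hle i₀ hcol
end

section
/- Let g : ℝ^d → ℝ be differentiable, μ-strongly convex and have L-Lipschitz gradient, where 0 < μ ≤ L. Then for all x, y ∈ ℝ^d: ⟨∇g(x) − ∇g(y), x − y⟩ ≥ (μL/(μ+L))·‖x − y‖² + (1/(μ+L))·‖∇g(x) − ∇g(y)‖². -/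
/-!
Subtracting `μ/2 ‖·‖²` from `g` leaves a convex function `h` with gradient `∇g − μ • id`, squeezed
between its tangent planes and the tangent planes raised by `(L − μ)/2 ‖b − a‖²`. For such a
function, comparing `h` at `b` and at the minimiser `b − (∇h b − ∇h a)/(L − μ)` of the upper
bound improves the lower bound by `‖∇h b − ∇h a‖² / (2(L − μ))`; symmetrising gives
cocoercivity `‖∇h x − ∇h y‖² ≤ (L − μ) ⟪∇h x − ∇h y, x − y⟫`, which expands to the claim.
-/

open scoped RealInnerProductSpace

open Filter Topology

section Gradient

variable {E : Type*} [NormedAddCommGroup E] [InnerProductSpace ℝ E] [CompleteSpace E]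
  {f : E → ℝ} {f' x v : E}

theorem HasGradientAt.hasDerivAt_comp_add_smul {t : ℝ} (hf : HasGradientAt f f' (x + t • v)) :
    HasDerivAt (fun s : ℝ => f (x + s • v)) ⟪f', v⟫ t := by
  have hline : HasDerivAt (fun s : ℝ => x + s • v) v t := by
    simpa using ((hasDerivAt_id t).smul_const v).const_add x
  exact hf.hasFDerivAt.comp_hasDerivAt t hline

theorem HasGradientAt.sub_mul_norm_sq (hf : HasGradientAt f f' x) (μ : ℝ) :
    HasGradientAt (fun y => f y - μ / 2 * ‖y‖ ^ 2) (f' - μ • x) x := by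
  refine (hf.hasFDerivAt.sub
    ((hasStrictFDerivAt_norm_sq x).hasFDerivAt.const_mul (μ / 2))).congr_fderiv ?_
  ext v
  simp only [sub_apply, smul_apply, InnerProductSpace.toDual_apply_apply, innerSL_apply_apply,
    inner_sub_left, real_inner_smul_left, smul_eq_mul, nsmul_eq_mul]
  ring

theorem ConvexOn.add_inner_le {s : Set E} {y : E} (hfc : ConvexOn ℝ s f) (hx : x ∈ s)
    (hy : y ∈ s) (hf : HasGradientAt f f' x) : f x + ⟪f', y - x⟫ ≤ f y := by
  have hline : f ∘ AffineMap.lineMap x y = fun t : ℝ => f (x + t • (y - x)) := by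
    ext t
    simp [AffineMap.lineMap_apply_module', add_comm]
  have hconv := hfc.comp_affineMap (AffineMap.lineMap x y)
  rw [hline] at hconv
  have hderiv : HasDerivAt (fun t : ℝ => f (x + t • (y - x))) ⟪f', y - x⟫ 0 :=
    HasGradientAt.hasDerivAt_comp_add_smul (by simpa using hf)
  simpa [slope_def_field, le_sub_iff_add_le'] using
    hconv.le_slope_of_hasDerivAt (by simpa) (by simpa) zero_lt_one hderiv

theorem le_add_inner_add_of_lipschitz_gradient {f' : E → E} {C : ℝ}
    (hf : ∀ z, HasGradientAt f (f' z) z) (hlip : ∀ a b, ‖f' a - f' b‖ ≤ C * ‖a - b‖) (x y : E) :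
    f y ≤ f x + ⟪f' x, y - x⟫ + C / 2 * ‖y - x‖ ^ 2 := by
  set v := y - x
  let φ : ℝ → ℝ := fun t => f (x + t • v) - t * ⟪f' x, v⟫ - C / 2 * t ^ 2 * ‖v‖ ^ 2
  have hφ : ∀ t, HasDerivAt φ (⟪f' (x + t • v), v⟫ - ⟪f' x, v⟫ - C * t * ‖v‖ ^ 2) t := by
    intro t
    have hline : HasDerivAt (fun s : ℝ => f (x + s • v)) ⟪f' (x + t • v), v⟫ t :=
      (hf _).hasDerivAt_comp_add_smul
    have hlin := (hasDerivAt_id t).mul_const ⟪f' x, v⟫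
    have hquad := ((hasDerivAt_pow 2 t).const_mul (C / 2)).mul_const (‖v‖ ^ 2)
    exact ((hline.sub hlin).sub hquad).congr_deriv (by push_cast; ring)
  have hφ_nonpos : ∀ t, 0 ≤ t → ⟪f' (x + t • v), v⟫ - ⟪f' x, v⟫ ≤ C * t * ‖v‖ ^ 2 :=
    fun t ht => calc
      ⟪f' (x + t • v), v⟫ - ⟪f' x, v⟫ = ⟪f' (x + t • v) - f' x, v⟫ := (inner_sub_left ..).symm
      _ ≤ ‖f' (x + t • v) - f' x‖ * ‖v‖ := real_inner_le_norm _ _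
      _ ≤ C * ‖(x + t • v) - x‖ * ‖v‖ := by gcongr; exact hlip _ _
      _ = C * t * ‖v‖ ^ 2 := by
        rw [add_sub_cancel_left, norm_smul, Real.norm_eq_abs, abs_of_nonneg ht]
        ring
  have hanti : AntitoneOn φ (Set.Ici 0) :=
    antitoneOn_of_hasDerivWithinAt_nonpos (convex_Ici 0)
      (fun t _ => (hφ t).continuousAt.continuousWithinAt)
      (fun t _ => (hφ t).hasDerivWithinAt)
      (fun t ht => by
        rw [interior_Ici] at ht
        linarith [hφ_nonpos t ht.le])
  have hφ0 : φ 0 = f x := by simp [φ]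
  have hφ1 : φ 1 = f y - ⟪f' x, y - x⟫ - C / 2 * ‖y - x‖ ^ 2 := by simp [φ, v]
  linarith [hanti Set.self_mem_Ici (Set.mem_Ici.2 zero_le_one) zero_le_one]

end Gradient

section TangentBounds

variable {E : Type*} [NormedAddCommGroup E] [InnerProductSpace ℝ E]

theorem sub_half_mul_norm_sq_le_of_le {f : E → ℝ} {g a b : E} {C μ : ℝ}
    (h : f b ≤ f a + ⟪g, b - a⟫ + C / 2 * ‖b - a‖ ^ 2) :
    f b - μ / 2 * ‖b‖ ^ 2 ≤
      f a - μ / 2 * ‖a‖ ^ 2 + ⟪g - μ • a, b - a⟫ + (C - μ) / 2 * ‖b - a‖ ^ 2 := by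
  have hb := norm_add_sq_real a (b - a)
  rw [add_sub_cancel] at hb
  rw [inner_sub_left, real_inner_smul_left]
  linear_combination h - μ / 2 * hb

theorem add_inner_add_norm_sub_sq_div_le_of_tangent_bounds {f : E → ℝ} {G : E → E} {C : ℝ}
    (hC : 0 < C) (hlow : ∀ a b, f a + ⟪G a, b - a⟫ ≤ f b)
    (hup : ∀ a b, f b ≤ f a + ⟪G a, b - a⟫ + C / 2 * ‖b - a‖ ^ 2) (a b : E) :
    f a + ⟪G a, b - a⟫ + ‖G b - G a‖ ^ 2 / (2 * C) ≤ f b := by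
  set w := G b - G a
  set z := b - C⁻¹ • w
  have hlow_z := hlow a z
  have hup_z := hup b z
  rw [show z - a = (b - a) - C⁻¹ • w by module, inner_sub_right, real_inner_smul_right] at hlow_z
  rw [show z - b = -(C⁻¹ • w) by module, inner_neg_right, real_inner_smul_right, norm_neg,
    norm_smul, Real.norm_eq_abs, abs_inv, abs_of_pos hC] at hup_z
  have hw : C⁻¹ * ⟪G b, w⟫ - C⁻¹ * ⟪G a, w⟫ = C⁻¹ * ‖w‖ ^ 2 := by
    rw [← mul_sub, ← inner_sub_left, real_inner_self_eq_norm_sq]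
  have hquad : C / 2 * (C⁻¹ * ‖w‖) ^ 2 = ‖w‖ ^ 2 / (2 * C) := by field_simp
  have hhalf : C⁻¹ * ‖w‖ ^ 2 - ‖w‖ ^ 2 / (2 * C) = ‖w‖ ^ 2 / (2 * C) := by field_simp; ring
  linarith

theorem norm_sub_sq_le_mul_inner_of_tangent_bounds {f : E → ℝ} {G : E → E} {C : ℝ}
    (hC : 0 ≤ C) (hlow : ∀ a b, f a + ⟪G a, b - a⟫ ≤ f b)
    (hup : ∀ a b, f b ≤ f a + ⟪G a, b - a⟫ + C / 2 * ‖b - a‖ ^ 2) (x y : E) :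
    ‖G x - G y‖ ^ 2 ≤ C * ⟪G x - G y, x - y⟫ := by
  -- Prove it for every constant `C + ε > 0` and let `ε → 0`; this also covers `C = 0`.
  have hpos : ∀ ε > 0, ‖G x - G y‖ ^ 2 ≤ (C + ε) * ⟪G x - G y, x - y⟫ := by
    intro ε hε
    have hCε : 0 < C + ε := by linarith
    have hupε : ∀ a b, f b ≤ f a + ⟪G a, b - a⟫ + (C + ε) / 2 * ‖b - a‖ ^ 2 := fun a b =>
      (hup a b).trans (by gcongr; linarith)
    have hxy := add_inner_add_norm_sub_sq_div_le_of_tangent_bounds hCε hlow hupε x y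
    have hyx := add_inner_add_norm_sub_sq_div_le_of_tangent_bounds hCε hlow hupε y x
    have hsym : ⟪G x, y - x⟫ = -⟪G x, x - y⟫ := by rw [← inner_neg_right, neg_sub]
    have hhalf : ‖G x - G y‖ ^ 2 / (2 * (C + ε)) + ‖G x - G y‖ ^ 2 / (2 * (C + ε)) =
        ‖G x - G y‖ ^ 2 / (C + ε) := by field_simp; ring
    rw [norm_sub_rev (G y)] at hxy
    rw [inner_sub_left, ← div_le_iff₀' hCε]
    linarith
  have hlim : Tendsto (fun ε => (C + ε) * ⟪G x - G y, x - y⟫) (𝓝[>] 0)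
      (𝓝 (C * ⟪G x - G y, x - y⟫)) := by
    have hcont : Continuous fun ε : ℝ => (C + ε) * ⟪G x - G y, x - y⟫ := by fun_prop
    simpa using (hcont.tendsto 0).mono_left nhdsWithin_le_nhds
  exact ge_of_tendsto hlim (eventually_nhdsWithin_of_forall hpos)

theorem mul_div_add_div_le_inner_of_norm_sub_smul_sq_le {Δ u : E} {μ L : ℝ} (hμL : 0 < μ + L)
    (h : ‖Δ - μ • u‖ ^ 2 ≤ (L - μ) * ⟪Δ - μ • u, u⟫) :
    μ * L / (μ + L) * ‖u‖ ^ 2 + 1 / (μ + L) * ‖Δ‖ ^ 2 ≤ ⟪Δ, u⟫ := by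
  rw [norm_sub_sq_real, inner_sub_left, real_inner_smul_right, real_inner_smul_left,
    real_inner_self_eq_norm_sq, norm_smul, mul_pow, Real.norm_eq_abs, sq_abs] at h
  rw [show μ * L / (μ + L) * ‖u‖ ^ 2 + 1 / (μ + L) * ‖Δ‖ ^ 2
      = (μ * L * ‖u‖ ^ 2 + ‖Δ‖ ^ 2) / (μ + L) by ring, div_le_iff₀ hμL]
  linarith

end TangentBounds

/-- Coercivity of strongly convex smooth functions: if `g : ℝ^d → ℝ` is
differentiable, `μ`-strongly convex (i.e. `x ↦ g(x) − (μ/2)‖x‖²` is convex) and has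
`L`-Lipschitz gradient with `0 < μ ≤ L`, then for all `x, y`:
`⟨∇g(x) − ∇g(y), x − y⟩ ≥ (μL/(μ+L))‖x − y‖² + (1/(μ+L))‖∇g(x) − ∇g(y)‖²`. -/
theorem strongConvex_gradient_coercivity {d : ℕ} (μ L : ℝ) (hμ : 0 < μ) (hμL : μ ≤ L)
    (g : EuclideanSpace ℝ (Fin d) → ℝ)
    (hdiff : Differentiable ℝ g)
    (hsc : ConvexOn ℝ Set.univ (fun x => g x - μ / 2 * ‖x‖ ^ 2))
    (hlip : ∀ x y, ‖gradient g x - gradient g y‖ ≤ L * ‖x - y‖) :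
    ∀ x y : EuclideanSpace ℝ (Fin d),
      μ * L / (μ + L) * ‖x - y‖ ^ 2 + 1 / (μ + L) * ‖gradient g x - gradient g y‖ ^ 2 ≤
        ⟪gradient g x - gradient g y, x - y⟫ := by
  intro x y
  set h := fun z => g z - μ / 2 * ‖z‖ ^ 2
  have hlow : ∀ a b, h a + ⟪gradient g a - μ • a, b - a⟫ ≤ h b := fun a b =>
    hsc.add_inner_le (Set.mem_univ a) (Set.mem_univ b)
      ((hdiff a).hasGradientAt.sub_mul_norm_sq μ)
  have hup : ∀ a b, h b ≤ h a + ⟪gradient g a - μ • a, b - a⟫ + (L - μ) / 2 * ‖b - a‖ ^ 2 :=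
    fun a b => sub_half_mul_norm_sq_le_of_le
      (le_add_inner_add_of_lipschitz_gradient (fun z => (hdiff z).hasGradientAt) hlip a b)
  have hcoco := norm_sub_sq_le_mul_inner_of_tangent_bounds (sub_nonneg.2 hμL) hlow hup x y
  rw [show gradient g x - μ • x - (gradient g y - μ • y)
      = gradient g x - gradient g y - μ • (x - y) by module] at hcoco
  exact mul_div_add_div_le_inner_of_norm_sub_smul_sq_le (by linarith) hcoco
end

section
/- Let f : ℝ^d → ℝ be differentiable, μ-strongly convex and have L-Lipschitz gradient with 0 < μ ≤ L, and let the step size h satisfy 0 < h ≤ 2/(μ+L). Then for all x, y ∈ ℝ^d: ‖(x − h∇f(x)) − (y − h∇f(y))‖ ≤ (1 − μh)·‖x − y‖. In particular, if w* is the global minimizer of f, then ‖x − h∇f(x) − w*‖ ≤ (1 − μh)·‖x − w*‖ for every x. -/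
/-!
Write `f = φ + (μ/2)‖·‖²`. Then `φ` is convex, and so is `((L - μ)/2)‖·‖² - φ = (L/2)‖·‖² - f`
because `∇f` is `L`-Lipschitz. These two convexity facts make `∇φ` co-coercive
(Baillon–Haddad): `‖∇φ x - ∇φ y‖² ≤ (L - μ) ⟪∇φ x - ∇φ y, x - y⟫`. Since
`(x - h∇f x) - (y - h∇f y) = (1 - μh)(x - y) - h(∇φ x - ∇φ y)`, expanding the square and using
co-coercivity with `h(L + μ) ≤ 2` bounds it by `(1 - μh)²‖x - y‖²`. At a minimizer the gradient
vanishes, which gives the second claim.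
-/

open Set InnerProductSpace Filter Topology AffineMap
open scoped RealInnerProductSpace

section

variable {E : Type*} [NormedAddCommGroup E] [InnerProductSpace ℝ E]

theorem norm_smul_sub_smul_le {a h K : ℝ} {r s : E} (ha : 0 ≤ a) (hh : 0 ≤ h)
    (hhK : h * K ≤ 2 * a) (hs : ‖s‖ ^ 2 ≤ K * ⟪s, r⟫) (hsr : 0 ≤ ⟪s, r⟫) :
    ‖a • r - h • s‖ ≤ a * ‖r‖ := by
  refine le_of_pow_le_pow_left₀ two_ne_zero (by positivity) ?_
  rw [norm_sub_sq_real, norm_smul, norm_smul, real_inner_smul_left, real_inner_smul_right,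
    real_inner_comm, Real.norm_of_nonneg ha, Real.norm_of_nonneg hh]
  nlinarith [mul_le_mul_of_nonneg_left hs (mul_nonneg hh hh),
    mul_le_mul_of_nonneg_right hhK (mul_nonneg hh hsr)]

variable [CompleteSpace E] {g : E → ℝ} {G : E → E}

theorem HasGradientAt.sub {g₁ g₂ : E → ℝ} {G₁ G₂ x : E} (h₁ : HasGradientAt g₁ G₁ x)
    (h₂ : HasGradientAt g₂ G₂ x) : HasGradientAt (fun y => g₁ y - g₂ y) (G₁ - G₂) x := by
  rw [hasGradientAt_iff_hasFDerivAt, map_sub]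
  exact h₁.hasFDerivAt.sub h₂.hasFDerivAt

theorem hasGradientAt_half_mul_norm_sq (c : ℝ) (x : E) :
    HasGradientAt (fun y => c / 2 * ‖y‖ ^ 2) (c • x) x := by
  rw [hasGradientAt_iff_hasFDerivAt]
  refine ((hasStrictFDerivAt_norm_sq x).hasFDerivAt.const_mul (c / 2)).congr_fderiv ?_
  ext y
  simp only [smul_apply, coe_innerSL_apply, nsmul_eq_mul, Nat.cast_ofNat,
    smul_eq_mul, map_smul, toDual_apply_apply]
  ring

theorem HasGradientAt.hasDerivAt_comp_lineMap {x y : E} {t : ℝ} {G₀ : E}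
    (hg : HasGradientAt g G₀ (lineMap (k := ℝ) x y t)) :
    HasDerivAt (g ∘ lineMap (k := ℝ) x y) ⟪G₀, y - x⟫ t := by
  simpa using hg.hasFDerivAt.comp_hasDerivAt t AffineMap.hasDerivAt_lineMap

theorem ConvexOn.add_inner_le_of_hasGradientAt (hc : ConvexOn ℝ univ g) {x G₀ : E}
    (hg : HasGradientAt g G₀ x) (y : E) : g x + ⟪G₀, y - x⟫ ≤ g y := by
  have hline : ConvexOn ℝ univ (g ∘ lineMap (k := ℝ) x y) := by
    simpa using hc.comp_affineMap (lineMap (k := ℝ) x y)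
  have hd : HasDerivAt (g ∘ lineMap (k := ℝ) x y) ⟪G₀, y - x⟫ 0 :=
    HasGradientAt.hasDerivAt_comp_lineMap (by simpa using hg)
  have := hline.le_slope_of_hasDerivAt (mem_univ 0) (mem_univ 1) one_pos hd
  simp only [slope_def_field, Function.comp_apply, lineMap_apply_one, lineMap_apply_zero,
    sub_zero, div_one] at this
  linarith

theorem ConvexOn.inner_gradient_sub_nonneg (hc : ConvexOn ℝ univ g)
    (hg : ∀ z, HasGradientAt g (G z) z) (x y : E) : 0 ≤ ⟪G x - G y, x - y⟫ := by
  have hx := hc.add_inner_le_of_hasGradientAt (hg x) y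
  have hy := hc.add_inner_le_of_hasGradientAt (hg y) x
  rw [← neg_sub x y, inner_neg_right] at hx
  rw [inner_sub_left]
  linarith

theorem convexOn_univ_of_inner_gradient_sub_nonneg (hg : ∀ z, HasGradientAt g (G z) z)
    (hmono : ∀ x y, 0 ≤ ⟪G x - G y, x - y⟫) : ConvexOn ℝ univ g := by
  refine ⟨convex_univ, fun x _ y _ a b ha hb hab => ?_⟩
  have hd (t : ℝ) : HasDerivAt (g ∘ lineMap (k := ℝ) x y) ⟪G (lineMap (k := ℝ) x y t), y - x⟫ t :=
    (hg _).hasDerivAt_comp_lineMap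
  have hline : ConvexOn ℝ univ (g ∘ lineMap (k := ℝ) x y) := by
    refine Monotone.convexOn_univ_of_deriv (fun t => (hd t).differentiableAt) ?_
    intro s t hst
    rcases hst.eq_or_lt with rfl | hlt
    · rfl
    have hdiff : lineMap (k := ℝ) x y t - lineMap (k := ℝ) x y s = (t - s) • (y - x) := by
      simp only [lineMap_apply_module']
      module
    have := hmono (lineMap (k := ℝ) x y t) (lineMap (k := ℝ) x y s)
    rw [hdiff, real_inner_smul_right, inner_sub_left] at this
    simp only [(hd _).deriv]
    linarith [nonneg_of_mul_nonneg_right this (sub_pos.2 hlt)]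
  have := hline.2 (mem_univ 0) (mem_univ 1) ha hb hab
  obtain rfl : a = 1 - b := by linarith
  simpa [lineMap_apply_module] using this

theorem convexOn_half_mul_norm_sq_sub_of_lipschitz {L : ℝ} (hg : ∀ z, HasGradientAt g (G z) z)
    (hlip : ∀ x y, ‖G x - G y‖ ≤ L * ‖x - y‖) :
    ConvexOn ℝ univ fun x => L / 2 * ‖x‖ ^ 2 - g x := by
  refine convexOn_univ_of_inner_gradient_sub_nonneg
    (fun z => (hasGradientAt_half_mul_norm_sq L z).sub (hg z)) fun x y => ?_
  have hsplit : L • x - G x - (L • y - G y) = L • (x - y) - (G x - G y) := by module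
  rw [hsplit, inner_sub_left, real_inner_smul_left, real_inner_self_eq_norm_sq]
  nlinarith [real_inner_le_norm (G x - G y) (x - y), hlip x y, norm_nonneg (x - y)]

theorem le_add_inner_add_half_mul_norm_sq {K : ℝ} (hg : ∀ z, HasGradientAt g (G z) z)
    (hψ : ConvexOn ℝ univ fun x => K / 2 * ‖x‖ ^ 2 - g x) (y z : E) :
    g z ≤ g y + ⟪G y, z - y⟫ + K / 2 * ‖z - y‖ ^ 2 := by
  have := hψ.add_inner_le_of_hasGradientAt ((hasGradientAt_half_mul_norm_sq K y).sub (hg y)) z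
  rw [inner_sub_left, real_inner_smul_left, inner_sub_right, real_inner_self_eq_norm_sq] at this
  rw [norm_sub_sq_real, real_inner_comm y z]
  linarith

theorem add_inner_add_sq_norm_sub_div_le {K : ℝ} (hK : 0 < K)
    (hg : ∀ z, HasGradientAt g (G z) z) (hc : ConvexOn ℝ univ g)
    (hψ : ConvexOn ℝ univ fun x => K / 2 * ‖x‖ ^ 2 - g x) (x y : E) :
    g x + ⟪G x, y - x⟫ + ‖G y - G x‖ ^ 2 / (2 * K) ≤ g y := by
  set s := G y - G x
  -- `z` minimizes the quadratic upper bound at `y` of the convex `g - ⟪G x, ·⟫`, minimal at `x`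
  set z := y - K⁻¹ • s
  have hfirst := hc.add_inner_le_of_hasGradientAt (hg x) z
  have hdesc := le_add_inner_add_half_mul_norm_sq hg hψ y z
  have hzy : z - y = -K⁻¹ • s := by simp [z, neg_smul]
  rw [show z - x = (y - x) + (z - y) by abel, inner_add_right, hzy, real_inner_smul_right]
    at hfirst
  rw [hzy, norm_smul, mul_pow, Real.norm_eq_abs, sq_abs, real_inner_smul_right] at hdesc
  have hquad : K / 2 * ((-K⁻¹) ^ 2 * ‖s‖ ^ 2) = ‖s‖ ^ 2 / (2 * K) := by
    field_simp
  have hlin : K⁻¹ * ⟪G y, s⟫ - K⁻¹ * ⟪G x, s⟫ = ‖s‖ ^ 2 / (2 * K) + ‖s‖ ^ 2 / (2 * K) := by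
    rw [← mul_sub, ← inner_sub_left, real_inner_self_eq_norm_sq]
    field_simp
    ring
  linarith

theorem sq_norm_sub_le_mul_inner_of_pos {K : ℝ} (hK : 0 < K) (hg : ∀ z, HasGradientAt g (G z) z)
    (hc : ConvexOn ℝ univ g) (hψ : ConvexOn ℝ univ fun x => K / 2 * ‖x‖ ^ 2 - g x) (x y : E) :
    ‖G x - G y‖ ^ 2 ≤ K * ⟪G x - G y, x - y⟫ := by
  have hxy := add_inner_add_sq_norm_sub_div_le hK hg hc hψ x y
  have hyx := add_inner_add_sq_norm_sub_div_le hK hg hc hψ y x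
  rw [norm_sub_rev] at hxy
  have hinner : ⟪G x - G y, x - y⟫ = -⟪G x, y - x⟫ - ⟪G y, x - y⟫ := by
    rw [inner_sub_left, ← neg_sub y x, inner_neg_right]
  have hhalf : ‖G x - G y‖ ^ 2 / K
      = ‖G x - G y‖ ^ 2 / (2 * K) + ‖G x - G y‖ ^ 2 / (2 * K) := by
    field_simp
    ring
  rw [← div_le_iff₀' hK]
  linarith

theorem sq_norm_sub_le_mul_inner {K : ℝ} (hK : 0 ≤ K) (hg : ∀ z, HasGradientAt g (G z) z)
    (hc : ConvexOn ℝ univ g) (hψ : ConvexOn ℝ univ fun x => K / 2 * ‖x‖ ^ 2 - g x) (x y : E) :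
    ‖G x - G y‖ ^ 2 ≤ K * ⟪G x - G y, x - y⟫ := by
  -- `K = 0` is reached as a limit of the strictly positive case
  have hlarger (K' : ℝ) (hK' : K < K') : ‖G x - G y‖ ^ 2 ≤ K' * ⟪G x - G y, x - y⟫ := by
    refine sq_norm_sub_le_mul_inner_of_pos (hK.trans_lt hK') hg hc
      (convexOn_univ_of_inner_gradient_sub_nonneg
        (fun z => (hasGradientAt_half_mul_norm_sq K' z).sub (hg z)) fun u v => ?_) x y
    have hmono := hψ.inner_gradient_sub_nonneg
      (fun z => (hasGradientAt_half_mul_norm_sq K z).sub (hg z)) u v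
    have hsplit : K' • u - G u - (K' • v - G v)
        = (K' - K) • (u - v) + (K • u - G u - (K • v - G v)) := by module
    rw [hsplit, inner_add_left, real_inner_smul_left, real_inner_self_eq_norm_sq]
    nlinarith [sub_pos.2 hK', sq_nonneg ‖u - v‖]
  have hlim : Tendsto (fun K' => K' * ⟪G x - G y, x - y⟫) (𝓝[>] K)
      (𝓝 (K * ⟪G x - G y, x - y⟫)) :=
    tendsto_nhdsWithin_of_tendsto_nhds ((continuous_mul_const _).tendsto K)
  exact ge_of_tendsto hlim (eventually_nhdsWithin_of_forall hlarger)

end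

theorem gradient_step_contraction_general {d : ℕ} (μ L h : ℝ) (hμL : μ ≤ L)
    (hh0 : 0 < h) (hh : h ≤ 2 / (μ + L))
    (f : EuclideanSpace ℝ (Fin d) → ℝ)
    (hdiff : Differentiable ℝ f)
    (hsc : ConvexOn ℝ Set.univ (fun x => f x - μ / 2 * ‖x‖ ^ 2))
    (hlip : ∀ x y, ‖gradient f x - gradient f y‖ ≤ L * ‖x - y‖) :
    (∀ x y : EuclideanSpace ℝ (Fin d),
        ‖(x - h • gradient f x) - (y - h • gradient f y)‖ ≤ (1 - μ * h) * ‖x - y‖) ∧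
      ∀ wstar : EuclideanSpace ℝ (Fin d), (∀ z, f wstar ≤ f z) →
        ∀ x, ‖x - h • gradient f x - wstar‖ ≤ (1 - μ * h) * ‖x - wstar‖ := by
  have hsum : 0 < μ + L := (div_pos_iff_of_pos_left two_pos).1 (hh0.trans_le hh)
  have hstep : h * (μ + L) ≤ 2 := (le_div_iff₀ hsum).1 hh
  have hgrad (z : EuclideanSpace ℝ (Fin d)) : HasGradientAt f (gradient f z) z :=
    (hdiff z).hasGradientAt
  have hgradφ (z : EuclideanSpace ℝ (Fin d)) :
      HasGradientAt (fun x => f x - μ / 2 * ‖x‖ ^ 2) (gradient f z - μ • z) z :=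
    (hgrad z).sub (hasGradientAt_half_mul_norm_sq μ z)
  have hψ : ConvexOn ℝ univ fun x => (L - μ) / 2 * ‖x‖ ^ 2 - (f x - μ / 2 * ‖x‖ ^ 2) := by
    have hfun : (fun x => (L - μ) / 2 * ‖x‖ ^ 2 - (f x - μ / 2 * ‖x‖ ^ 2))
        = fun x => L / 2 * ‖x‖ ^ 2 - f x := by
      funext x
      ring
    exact hfun ▸ convexOn_half_mul_norm_sq_sub_of_lipschitz hgrad hlip
  have hcontract (x y : EuclideanSpace ℝ (Fin d)) :
      ‖(x - h • gradient f x) - (y - h • gradient f y)‖ ≤ (1 - μ * h) * ‖x - y‖ := by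
    have hco := sq_norm_sub_le_mul_inner (sub_nonneg.2 hμL) hgradφ hsc hψ x y
    have hmono := hsc.inner_gradient_sub_nonneg hgradφ x y
    have hsplit : (x - h • gradient f x) - (y - h • gradient f y)
        = (1 - μ * h) • (x - y) - h • (gradient f x - μ • x - (gradient f y - μ • y)) := by
      module
    rw [hsplit]
    exact norm_smul_sub_smul_le (K := L - μ) (by nlinarith) hh0.le (by nlinarith) hco hmono
  refine ⟨hcontract, fun wstar hmin x => ?_⟩
  have hzero : gradient f wstar = 0 :=
    (toDual ℝ _).map_eq_zero_iff.1
      (IsLocalMin.hasFDerivAt_eq_zero (Eventually.of_forall hmin) (hgrad wstar))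
  simpa [hzero] using hcontract x wstar

/-- Contraction of the gradient descent map for strongly convex smooth functions:
if `f : ℝ^d → ℝ` is differentiable, `μ`-strongly convex and has `L`-Lipschitz
gradient with `0 < μ ≤ L`, and `0 < h ≤ 2/(μ+L)`, then the map `x ↦ x − h∇f(x)` is
`(1 − μh)`-Lipschitz; in particular, if `w*` is a global minimizer of `f` then
`‖x − h∇f(x) − w*‖ ≤ (1 − μh)‖x − w*‖` for every `x`. -/
theorem gradient_step_contraction {d : ℕ} (μ L h : ℝ) (hμ : 0 < μ) (hμL : μ ≤ L)
    (hh0 : 0 < h) (hh : h ≤ 2 / (μ + L))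
    (f : EuclideanSpace ℝ (Fin d) → ℝ)
    (hdiff : Differentiable ℝ f)
    (hsc : ConvexOn ℝ Set.univ (fun x => f x - μ / 2 * ‖x‖ ^ 2))
    (hlip : ∀ x y, ‖gradient f x - gradient f y‖ ≤ L * ‖x - y‖) :
    (∀ x y : EuclideanSpace ℝ (Fin d),
        ‖(x - h • gradient f x) - (y - h • gradient f y)‖ ≤ (1 - μ * h) * ‖x - y‖) ∧
      ∀ wstar : EuclideanSpace ℝ (Fin d), (∀ z, f wstar ≤ f z) →
        ∀ x, ‖x - h • gradient f x - wstar‖ ≤ (1 - μ * h) * ‖x - wstar‖ :=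
  gradient_step_contraction_general μ L h hμL hh0 hh f hdiff hsc hlip
end

section
/- Let f : ℝ^d → ℝ be differentiable with L-Lipschitz gradient (L > 0), bounded below with f* := inf f, and satisfying the Polyak–Łojasiewicz inequality with parameter μ > 0. Then for every step size h ∈ (0, 2/L) and every w ∈ ℝ^d: f(w − h∇f(w)) − f* ≤ (1 − μh(2 − Lh))·(f(w) − f*). -/
/-!
Along the segment `t ↦ x + t • v`, the Lipschitz bound on `∇f` lets `t ↦ f (x + t • v)` grow no
faster than its quadratic model, which gives the descent lemma
`f (x + v) ≤ f x + ⟪∇f x, v⟫ + L/2 ‖v‖²`. A gradient step of size `h` therefore lowers `f` by at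
least `h (1 - L h / 2) ‖∇f w‖²`, and the PL inequality bounds `‖∇f w‖²` below by `2μ (f w - f*)`.
-/

open RealInnerProductSpace Set

variable {E : Type*} [NormedAddCommGroup E] [InnerProductSpace ℝ E] [CompleteSpace E]

theorem hasDerivAt_apply_add_smul_of_differentiable {f : E → ℝ} (hf : Differentiable ℝ f)
    (x v : E) (t : ℝ) :
    HasDerivAt (fun s : ℝ => f (x + s • v)) ⟪gradient f (x + t • v), v⟫ t := by
  have hline : HasDerivAt (fun s : ℝ => x + s • v) v t := by
    simpa using ((hasDerivAt_id t).smul_const v).const_add x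
  exact (hf _).hasGradientAt.hasFDerivAt.comp_hasDerivAt t hline

theorem apply_add_le_of_lipschitz_gradient {f : E → ℝ} {L : ℝ} (hf : Differentiable ℝ f)
    (hlip : ∀ x y, ‖gradient f x - gradient f y‖ ≤ L * ‖x - y‖) (x v : E) :
    f (x + v) ≤ f x + ⟪gradient f x, v⟫ + L / 2 * ‖v‖ ^ 2 := by
  have hline := hasDerivAt_apply_add_smul_of_differentiable hf x v
  have hmodel (t : ℝ) :
      HasDerivAt (fun s : ℝ => f x + s * ⟪gradient f x, v⟫ + L / 2 * s ^ 2 * ‖v‖ ^ 2)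
        (⟪gradient f x, v⟫ + L * t * ‖v‖ ^ 2) t :=
    ((((hasDerivAt_id' t).mul_const ⟪gradient f x, v⟫).const_add (f x)).add
      (((hasDerivAt_pow 2 t).const_mul (L / 2)).mul_const (‖v‖ ^ 2))).congr_deriv
      (by norm_num only; ring)
  have hslope (t : ℝ) (ht : 0 ≤ t) :
      ⟪gradient f (x + t • v), v⟫ ≤ ⟪gradient f x, v⟫ + L * t * ‖v‖ ^ 2 := by
    have := calc ⟪gradient f (x + t • v) - gradient f x, v⟫
        ≤ ‖gradient f (x + t • v) - gradient f x‖ * ‖v‖ := real_inner_le_norm _ _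
      _ ≤ L * ‖x + t • v - x‖ * ‖v‖ := by gcongr; exact hlip _ _
      _ = L * t * ‖v‖ ^ 2 := by
          rw [add_sub_cancel_left, norm_smul, Real.norm_of_nonneg ht]; ring
    rwa [inner_sub_left, sub_le_iff_le_add'] at this
  have hcompare := image_le_of_deriv_right_le_deriv_boundary (a := 0) (b := 1)
    (fun t _ => (hline t).continuousAt.continuousWithinAt) (fun t _ => (hline t).hasDerivWithinAt)
    (by simp) (fun t _ => (hmodel t).continuousAt.continuousWithinAt)
    (fun t _ => (hmodel t).hasDerivWithinAt) (fun t ht => hslope t ht.1)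
    (right_mem_Icc.2 zero_le_one)
  simpa using hcompare

theorem apply_sub_smul_gradient_le {f : E → ℝ} {L : ℝ} (hf : Differentiable ℝ f)
    (hlip : ∀ x y, ‖gradient f x - gradient f y‖ ≤ L * ‖x - y‖) (h : ℝ) (w : E) :
    f (w - h • gradient f w) ≤ f w - h * (1 - L * h / 2) * ‖gradient f w‖ ^ 2 := by
  have := apply_add_le_of_lipschitz_gradient hf hlip w (-(h • gradient f w))
  rw [← sub_eq_add_neg, inner_neg_right, real_inner_smul_right, real_inner_self_eq_norm_sq,
    norm_neg, norm_smul, mul_pow, Real.norm_eq_abs, sq_abs] at this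
  linarith

theorem pl_gradient_descent_decrease_general {d : ℕ} (L μ : ℝ) (hL : 0 < L) (hμ : 0 < μ)
    (f : EuclideanSpace ℝ (Fin d) → ℝ)
    (hdiff : Differentiable ℝ f)
    (hlip : ∀ x y, ‖gradient f x - gradient f y‖ ≤ L * ‖x - y‖)
    (hpl : ∀ w, f w - (⨅ x, f x) ≤ 1 / (2 * μ) * ‖gradient f w‖ ^ 2) :
    ∀ h : ℝ, 0 < h → h < 2 / L → ∀ w,
      f (w - h • gradient f w) - (⨅ x, f x) ≤
        (1 - μ * h * (2 - L * h)) * (f w - (⨅ x, f x)) := by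
  intro h hh hhL w
  have hstep := apply_sub_smul_gradient_le hdiff hlip h w
  have hgrad : 2 * μ * (f w - ⨅ x, f x) ≤ ‖gradient f w‖ ^ 2 := by
    have := hpl w
    rw [one_div, ← div_eq_inv_mul, le_div_iff₀ (by positivity)] at this
    linarith
  have hrate : 0 ≤ h * (1 - L * h / 2) := by
    have : L * h < 2 := by rwa [lt_div_iff₀ hL, mul_comm] at hhL
    exact mul_nonneg hh.le (by linarith)
  linarith [mul_le_mul_of_nonneg_left hgrad hrate]

/-- Linear decrease of the suboptimality gap for gradient descent on
Polyak–Łojasiewicz functions: if `f : ℝ^d → ℝ` is differentiable with `L`-Lipschitz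
gradient (`L > 0`), bounded below with `f* := inf f`, and satisfies the PL inequality
`f(w) − f* ≤ (1/(2μ))‖∇f(w)‖²` with `μ > 0`, then for every step size `h ∈ (0, 2/L)`
and every `w`: `f(w − h∇f(w)) − f* ≤ (1 − μh(2 − Lh))·(f(w) − f*)`. -/
theorem pl_gradient_descent_decrease {d : ℕ} (L μ : ℝ) (hL : 0 < L) (hμ : 0 < μ)
    (f : EuclideanSpace ℝ (Fin d) → ℝ)
    (hdiff : Differentiable ℝ f)
    (hlip : ∀ x y, ‖gradient f x - gradient f y‖ ≤ L * ‖x - y‖)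
    (hbdd : BddBelow (Set.range f))
    (hpl : ∀ w, f w - (⨅ x, f x) ≤ 1 / (2 * μ) * ‖gradient f w‖ ^ 2) :
    ∀ h : ℝ, 0 < h → h < 2 / L → ∀ w,
      f (w - h • gradient f w) - (⨅ x, f x) ≤
        (1 - μ * h * (2 - L * h)) * (f w - (⨅ x, f x)) :=
  pl_gradient_descent_decrease_general L μ hL hμ f hdiff hlip hpl
end

section
/- Let f : ℝ^d → ℝ be differentiable with L-Lipschitz gradient (L > 0). For any w, e ∈ ℝ^d and any h ≥ 0, the inexact gradient step w⁺ := w − h∇f(w) + e satisfies f(w) − f(w⁺) ≥ h(1 − Lh)·‖∇f(w)‖² − ‖∇f(w)‖·‖e‖ − L·‖e‖². -/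
/-! Along the segment `t ↦ x + t • v` the directional derivative of `f` drifts from its value at
`t = 0` by at most `L t ‖v‖²`, which integrates to the quadratic upper bound
`f (x + v) ≤ f x + ⟪∇f x, v⟫ + L/2 ‖v‖²`. Applied with `v = e - h ∇f(w)`, the linear term gives
`-h‖∇f(w)‖² + ⟪∇f(w), e⟫`, Cauchy–Schwarz bounds `⟪∇f(w), e⟫`, and
`‖e - h ∇f(w)‖² ≤ 2‖e‖² + 2h²‖∇f(w)‖²` bounds the quadratic term. -/

open InnerProductSpace Set

theorem le_add_deriv_add_half_of_deriv_sub_le {g g' : ℝ → ℝ} {C : ℝ}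
    (hg : ∀ t ∈ Icc (0 : ℝ) 1, HasDerivAt g (g' t) t)
    (hC : ∀ t ∈ Icc (0 : ℝ) 1, g' t - g' 0 ≤ C * t) :
    g 1 ≤ g 0 + g' 0 + C / 2 := by
  let φ : ℝ → ℝ := fun t => g t - t * g' 0 - C / 2 * t ^ 2
  have hφ : ∀ t ∈ Icc (0 : ℝ) 1, HasDerivAt φ (g' t - g' 0 - C * t) t := fun t ht => by
    refine (((hg t ht).sub ((hasDerivAt_id' t).mul_const (g' 0))).sub
      ((hasDerivAt_pow 2 t).const_mul (C / 2))).congr_deriv ?_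
    push_cast
    ring
  have hanti : AntitoneOn φ (Icc 0 1) := by
    refine antitoneOn_of_hasDerivWithinAt_nonpos (convex_Icc 0 1)
      (fun t ht => (hφ t ht).continuousAt.continuousWithinAt)
      (fun t ht => (hφ t (interior_subset ht)).hasDerivWithinAt) fun t ht => ?_
    linarith [hC t (interior_subset ht)]
  have := hanti (left_mem_Icc.2 zero_le_one) (right_mem_Icc.2 zero_le_one) zero_le_one
  simp only [φ] at this
  linarith

variable {F : Type*} [NormedAddCommGroup F] [InnerProductSpace ℝ F] [CompleteSpace F]

theorem le_add_inner_gradient_add_of_norm_gradient_sub_le {f : F → ℝ} {L : ℝ}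
    (hf : Differentiable ℝ f) (hlip : ∀ x y, ‖gradient f x - gradient f y‖ ≤ L * ‖x - y‖)
    (x v : F) :
    f (x + v) ≤ f x + ⟪gradient f x, v⟫_ℝ + L / 2 * ‖v‖ ^ 2 := by
  have hline : ∀ t : ℝ, HasDerivAt (fun t : ℝ => f (x + t • v))
      ⟪gradient f (x + t • v), v⟫_ℝ t := fun t => by
    have hseg : HasDerivAt (fun t : ℝ => x + t • v) v t := by
      simpa using ((hasDerivAt_id t).smul_const v).const_add x
    simpa [Function.comp_def] using
      (hf (x + t • v)).hasGradientAt.hasFDerivAt.comp_hasDerivAt t hseg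
  have hdrift : ∀ t ∈ Icc (0 : ℝ) 1,
      ⟪gradient f (x + t • v), v⟫_ℝ - ⟪gradient f (x + (0 : ℝ) • v), v⟫_ℝ ≤ L * ‖v‖ ^ 2 * t := by
    intro t ht
    calc ⟪gradient f (x + t • v), v⟫_ℝ - ⟪gradient f (x + (0 : ℝ) • v), v⟫_ℝ
        = ⟪gradient f (x + t • v) - gradient f x, v⟫_ℝ := by simp [inner_sub_left]
      _ ≤ ‖gradient f (x + t • v) - gradient f x‖ * ‖v‖ := real_inner_le_norm _ _
      _ ≤ L * ‖x + t • v - x‖ * ‖v‖ := by gcongr; exact hlip _ _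
      _ = L * ‖v‖ ^ 2 * t := by
        rw [add_sub_cancel_left, norm_smul, Real.norm_of_nonneg ht.1]
        ring
  have := le_add_deriv_add_half_of_deriv_sub_le (fun t _ => hline t) hdrift
  simp only [zero_smul, add_zero, one_smul] at this
  linarith

theorem inexact_descent_lemma_general {d : ℕ} (L : ℝ) (hL : 0 < L)
    (f : EuclideanSpace ℝ (Fin d) → ℝ)
    (hdiff : Differentiable ℝ f)
    (hlip : ∀ x y, ‖gradient f x - gradient f y‖ ≤ L * ‖x - y‖)
    (w e : EuclideanSpace ℝ (Fin d)) (h : ℝ) :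
    h * (1 - L * h) * ‖gradient f w‖ ^ 2 - ‖gradient f w‖ * ‖e‖ - L * ‖e‖ ^ 2 ≤
      f w - f (w - h • gradient f w + e) := by
  set g := gradient f w
  have hdesc := le_add_inner_gradient_add_of_norm_gradient_sub_le hdiff hlip w (e - h • g)
  rw [show w + (e - h • g) = w - h • g + e by abel] at hdesc
  have hinner : ⟪g, e - h • g⟫_ℝ = ⟪g, e⟫_ℝ - h * ‖g‖ ^ 2 := by
    rw [inner_sub_right, real_inner_smul_right, real_inner_self_eq_norm_sq]
  have hcs : ⟪g, e⟫_ℝ ≤ ‖g‖ * ‖e‖ := real_inner_le_norm _ _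
  have hsq : ‖e - h • g‖ ^ 2 ≤ 2 * (‖e‖ ^ 2 + h ^ 2 * ‖g‖ ^ 2) := by
    have hpar := parallelogram_law_with_norm ℝ e (h • g)
    rw [norm_smul, Real.norm_eq_abs] at hpar
    nlinarith [mul_self_nonneg ‖e + h • g‖, sq_abs h]
  nlinarith [mul_le_mul_of_nonneg_left hsq hL.le]

/-- Descent lemma for an inexact gradient step: if `f : ℝ^d → ℝ` is differentiable
with `L`-Lipschitz gradient (`L > 0`), then for any `w, e` and any `h ≥ 0`, the
inexact step `w⁺ := w − h∇f(w) + e` satisfies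
`f(w) − f(w⁺) ≥ h(1 − Lh)‖∇f(w)‖² − ‖∇f(w)‖·‖e‖ − L‖e‖²`. -/
theorem inexact_descent_lemma {d : ℕ} (L : ℝ) (hL : 0 < L)
    (f : EuclideanSpace ℝ (Fin d) → ℝ)
    (hdiff : Differentiable ℝ f)
    (hlip : ∀ x y, ‖gradient f x - gradient f y‖ ≤ L * ‖x - y‖)
    (w e : EuclideanSpace ℝ (Fin d)) (h : ℝ) (hh : 0 ≤ h) :
    h * (1 - L * h) * ‖gradient f w‖ ^ 2 - ‖gradient f w‖ * ‖e‖ - L * ‖e‖ ^ 2 ≤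
      f w - f (w - h • gradient f w + e) :=
  inexact_descent_lemma_general L hL f hdiff hlip w e h
end

section
/- Let f : ℝ^d → ℝ be differentiable with L-Lipschitz gradient (L > 0) and bounded below, with f_inf := inf f. Let h > 0 satisfy Lh < 1, let S ≥ 1, and let w₀, w₁, …, w_S ∈ ℝ^d satisfy w_{s+1} = w_s − h∇f(w_s) + e_s for 0 ≤ s ≤ S−1. Suppose G, E ≥ 0 are such that ‖∇f(w_s)‖ ≤ G and ‖e_s‖ ≤ E for all 0 ≤ s ≤ S−1. Then (1 − Lh)·(1/S)·∑_{s=0}^{S−1}‖∇f(w_s)‖² ≤ (f(w₀) − f_inf)/(hS) + (G·E + L·E²)/h. -/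
/-!
Each inexact step decreases `f` by at least `h (1 - Lh) ‖∇f(w_s)‖²`, up to the error terms: the
descent lemma `f y ≤ f x + ⟪∇f x, y - x⟫ + L ‖y - x‖²` applied to `y - x = e - h ∇f x` leaves
the cross term `⟪∇f x, e⟫` with coefficient `1 - 2Lh ∈ [-1, 1]`, hence a loss of at most
`G E + L E²`. Summing over `s < S` telescopes `f`, and `f(w_S) ≥ inf f`.
-/

open InnerProductSpace Finset

theorem le_add_fderiv_add_sq_of_lipschitz_fderiv {E : Type*} [NormedAddCommGroup E]
    [NormedSpace ℝ E] {f : E → ℝ} {L : ℝ} (hL : 0 ≤ L) (hf : Differentiable ℝ f)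
    (hlip : ∀ x y, ‖fderiv ℝ f x - fderiv ℝ f y‖ ≤ L * ‖x - y‖) (x y : E) :
    f y ≤ f x + fderiv ℝ f x (y - x) + L * ‖y - x‖ ^ 2 := by
  have hbound : ∀ z ∈ segment ℝ x y, ‖fderiv ℝ f z - fderiv ℝ f x‖ ≤ L * ‖y - x‖ :=
    fun z hz => (hlip z x).trans (mul_le_mul_of_nonneg_left (norm_sub_le_of_mem_segment hz) hL)
  have hrem := (convex_segment x y).norm_image_sub_le_of_norm_fderiv_le' (fun z _ => hf z)
    hbound (left_mem_segment ℝ x y) (right_mem_segment ℝ x y)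
  linarith [le_abs_self (f y - f x - fderiv ℝ f x (y - x)), Real.norm_eq_abs _ ▸ hrem]

variable {E : Type*} [NormedAddCommGroup E] [InnerProductSpace ℝ E] [CompleteSpace E]
  {f : E → ℝ} {L : ℝ}

theorem le_add_inner_gradient_add_sq_of_lipschitz_gradient (hL : 0 ≤ L)
    (hf : Differentiable ℝ f) (hlip : ∀ x y, ‖gradient f x - gradient f y‖ ≤ L * ‖x - y‖)
    (x y : E) :
    f y ≤ f x + ⟪gradient f x, y - x⟫_ℝ + L * ‖y - x‖ ^ 2 := by
  have hlip' : ∀ x y, ‖fderiv ℝ f x - fderiv ℝ f y‖ ≤ L * ‖x - y‖ := fun x y => by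
    rw [← toDual_gradient, ← toDual_gradient, ← map_sub, LinearIsometryEquiv.norm_map]
    exact hlip x y
  rw [inner_gradient_left]
  exact le_add_fderiv_add_sq_of_lipschitz_fderiv hL hf hlip' x y

theorem inexact_gradient_step_descent {h : ℝ} (hL : 0 ≤ L) (hh : 0 ≤ h) (hLh : L * h ≤ 1)
    (hf : Differentiable ℝ f) (hlip : ∀ x y, ‖gradient f x - gradient f y‖ ≤ L * ‖x - y‖)
    (x e : E) :
    h * (1 - L * h) * ‖gradient f x‖ ^ 2 ≤
      f x - f (x - h • gradient f x + e) + (‖gradient f x‖ * ‖e‖ + L * ‖e‖ ^ 2) := by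
  have hdesc := le_add_inner_gradient_add_sq_of_lipschitz_gradient hL hf hlip x
    (x - h • gradient f x + e)
  have hstep : x - h • gradient f x + e - x = e - h • gradient f x := by abel
  rw [hstep, norm_sub_sq_real, inner_sub_right, real_inner_smul_right, real_inner_smul_right,
    real_inner_self_eq_norm_sq, norm_smul, Real.norm_of_nonneg hh,
    real_inner_comm (gradient f x) e] at hdesc
  have hcross : (1 - 2 * (L * h)) * ⟪gradient f x, e⟫_ℝ ≤ ‖gradient f x‖ * ‖e‖ := by
    refine (le_abs_self _).trans ?_
    rw [abs_mul, ← one_mul (‖gradient f x‖ * ‖e‖)]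
    exact mul_le_mul (abs_le.2 ⟨by linarith, by nlinarith [mul_nonneg hL hh]⟩)
      (abs_real_inner_le_norm _ _) (abs_nonneg _) zero_le_one
  linear_combination hdesc + hcross

theorem sum_range_le_sub_add_of_le_sub_succ_add {a b : ℕ → ℝ} {c : ℝ} {S : ℕ}
    (hab : ∀ s < S, a s ≤ b s - b (s + 1) + c) :
    ∑ s ∈ range S, a s ≤ b 0 - b S + S * c := by
  calc ∑ s ∈ range S, a s ≤ ∑ s ∈ range S, (b s - b (s + 1) + c) :=
        sum_le_sum fun s hs => hab s (mem_range.1 hs)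
    _ = b 0 - b S + S * c := by
        rw [sum_add_distrib, sum_range_sub', sum_const, card_range, nsmul_eq_mul]

theorem inexact_gd_constant_step_bound_general {d : ℕ} (L h : ℝ) (hL : 0 < L) (hh0 : 0 < h)
    (hLh : L * h < 1)
    (f : EuclideanSpace ℝ (Fin d) → ℝ)
    (hdiff : Differentiable ℝ f)
    (hlip : ∀ x y, ‖gradient f x - gradient f y‖ ≤ L * ‖x - y‖)
    (hbdd : BddBelow (Set.range f))
    (S : ℕ) (hS : 1 ≤ S)
    (w e : ℕ → EuclideanSpace ℝ (Fin d))
    (hupd : ∀ s < S, w (s + 1) = w s - h • gradient f (w s) + e s)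
    (G E : ℝ)
    (hGb : ∀ s < S, ‖gradient f (w s)‖ ≤ G)
    (hEb : ∀ s < S, ‖e s‖ ≤ E) :
    (1 - L * h) * (1 / (S : ℝ) * ∑ s ∈ Finset.range S, ‖gradient f (w s)‖ ^ 2) ≤
      (f (w 0) - ⨅ x, f x) / (h * (S : ℝ)) + (G * E + L * E ^ 2) / h := by
  have hstep : ∀ s < S, h * (1 - L * h) * ‖gradient f (w s)‖ ^ 2 ≤
      f (w s) - f (w (s + 1)) + (G * E + L * E ^ 2) := fun s hs => by
    have hG : 0 ≤ G := (norm_nonneg _).trans (hGb s hs)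
    rw [hupd s hs]
    refine (inexact_gradient_step_descent hL.le hh0.le hLh.le hdiff hlip (w s) (e s)).trans ?_
    gcongr
    exacts [hGb s hs, hEb s hs, hEb s hs]
  have hsum := sum_range_le_sub_add_of_le_sub_succ_add (b := fun s => f (w s)) hstep
  rw [← mul_sum] at hsum
  have hinf : ⨅ x, f x ≤ f (w S) := ciInf_le hbdd (w S)
  have hSpos : (0 : ℝ) < S := by exact_mod_cast hS
  calc (1 - L * h) * (1 / (S : ℝ) * ∑ s ∈ range S, ‖gradient f (w s)‖ ^ 2)
      = (h * (1 - L * h) * ∑ s ∈ range S, ‖gradient f (w s)‖ ^ 2) / (h * S) := by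
        field_simp
    _ ≤ ((f (w 0) - ⨅ x, f x) + S * (G * E + L * E ^ 2)) / (h * S) := by
        gcongr
        linarith
    _ = (f (w 0) - ⨅ x, f x) / (h * S) + (G * E + L * E ^ 2) / h := by
        field_simp

/-- Finite-horizon guarantee for inexact gradient descent on smooth functions with a
constant step size: if `f` is differentiable with `L`-Lipschitz gradient, bounded
below with `f_inf := inf f`, `Lh < 1`, `w_{s+1} = w_s − h∇f(w_s) + e_s` for
`0 ≤ s ≤ S−1`, `‖∇f(w_s)‖ ≤ G` and `‖e_s‖ ≤ E`, then
`(1 − Lh)·(1/S)·∑_{s<S}‖∇f(w_s)‖² ≤ (f(w₀) − f_inf)/(hS) + (GE + LE²)/h`. -/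
theorem inexact_gd_constant_step_bound {d : ℕ} (L h : ℝ) (hL : 0 < L) (hh0 : 0 < h)
    (hLh : L * h < 1)
    (f : EuclideanSpace ℝ (Fin d) → ℝ)
    (hdiff : Differentiable ℝ f)
    (hlip : ∀ x y, ‖gradient f x - gradient f y‖ ≤ L * ‖x - y‖)
    (hbdd : BddBelow (Set.range f))
    (S : ℕ) (hS : 1 ≤ S)
    (w e : ℕ → EuclideanSpace ℝ (Fin d))
    (hupd : ∀ s < S, w (s + 1) = w s - h • gradient f (w s) + e s)
    (G E : ℝ) (hG : 0 ≤ G) (hE : 0 ≤ E)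
    (hGb : ∀ s < S, ‖gradient f (w s)‖ ≤ G)
    (hEb : ∀ s < S, ‖e s‖ ≤ E) :
    (1 - L * h) * (1 / (S : ℝ) * ∑ s ∈ Finset.range S, ‖gradient f (w s)‖ ^ 2) ≤
      (f (w 0) - ⨅ x, f x) / (h * (S : ℝ)) + (G * E + L * E ^ 2) / h :=
  inexact_gd_constant_step_bound_general L h hL hh0 hLh f hdiff hlip hbdd S hS w e hupd G E hGb hEb
end

section
/- Let M ≥ 1 and let f₁, …, f_M : ℝ^d → ℝ be differentiable and μ-strongly convex (μ > 0), and set f := (1/M)·∑_{i=1}^M f_i. Let w_i* be the global minimizer of f_i for each i, let w* be the global minimizer of f, and let Ω ⊆ ℝ^d be a set containing w* and all the w_i*. If K ≥ 0 satisfies ‖∇f_i(x) − ∇f_j(x)‖ ≤ K for all indices i, j and all x ∈ Ω, then ∑_{i=1}^M ‖w* − w_i*‖ ≤ (M/μ)·K. -/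
/-!
Strong convexity makes each gradient strongly monotone, and `∇fᵢ(wᵢ*) = 0`, so
`μ‖w* - wᵢ*‖ ≤ ‖∇fᵢ(w*)‖`. Since `∑ⱼ ∇fⱼ(w*) = 0`, the vector
`M ∇fᵢ(w*) = ∑ⱼ (∇fᵢ(w*) - ∇fⱼ(w*))` has norm at most `M K`, so each distance is at most
`K / μ`.
-/

open InnerProductSpace

theorem ConvexOn.hasFDerivAt_apply_sub_le {E : Type*} [NormedAddCommGroup E] [NormedSpace ℝ E]
    {f : E → ℝ} {s : Set E} {x y : E} {f'x f'y : E →L[ℝ] ℝ} (hf : ConvexOn ℝ s f)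
    (hx : x ∈ s) (hy : y ∈ s) (hfx : HasFDerivAt f f'x x) (hfy : HasFDerivAt f f'y y) :
    f'x (y - x) ≤ f'y (y - x) := by
  set ℓ : ℝ →ᵃ[ℝ] E := AffineMap.lineMap x y
  have hline : ConvexOn ℝ (ℓ ⁻¹' s) (f ∘ ℓ) := hf.comp_affineMap ℓ
  have h0 : (0 : ℝ) ∈ ℓ ⁻¹' s := by simpa [ℓ] using hx
  have h1 : (1 : ℝ) ∈ ℓ ⁻¹' s := by simpa [ℓ] using hy
  have hd0 : HasDerivAt (f ∘ ℓ) (f'x (y - x)) 0 := by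
    rw [← AffineMap.lineMap_apply_zero (k := ℝ) x y] at hfx
    exact hfx.comp_hasDerivAt 0 AffineMap.hasDerivAt_lineMap
  have hd1 : HasDerivAt (f ∘ ℓ) (f'y (y - x)) 1 := by
    rw [← AffineMap.lineMap_apply_one (k := ℝ) x y] at hfy
    exact hfy.comp_hasDerivAt 1 AffineMap.hasDerivAt_lineMap
  exact (hline.le_slope_of_hasDerivAt h0 h1 one_pos hd0).trans
    (hline.slope_le_of_hasDerivAt h0 h1 one_pos hd1)

section InnerProduct

variable {E : Type*} [NormedAddCommGroup E] [InnerProductSpace ℝ E] [CompleteSpace E]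

open scoped RealInnerProductSpace

theorem HasGradientAt.sum {ι : Type*} {u : Finset ι} {f : ι → E → ℝ} {g : ι → E} {x : E}
    (h : ∀ i ∈ u, HasGradientAt (f i) (g i) x) :
    HasGradientAt (fun y => ∑ i ∈ u, f i y) (∑ i ∈ u, g i) x := by
  rw [hasGradientAt_iff_hasFDerivAt, map_sum]
  exact HasFDerivAt.fun_sum fun i hi => (h i hi).hasFDerivAt

theorem IsLocalMin.hasGradientAt_eq_zero {f : E → ℝ} {g a : E} (h : IsLocalMin f a)
    (hf : HasGradientAt f g a) : g = 0 := by
  simpa using h.hasFDerivAt_eq_zero hf.hasFDerivAt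

section StrongConvexity

variable {f : E → ℝ} {s : Set E} {μ : ℝ} {x y gx gy : E}

theorem StrongConvexOn.mul_norm_sq_le_inner_sub
    (hf : StrongConvexOn s μ f) (hx : x ∈ s) (hy : y ∈ s) (hgx : HasGradientAt f gx x)
    (hgy : HasGradientAt f gy y) : μ * ‖y - x‖ ^ 2 ≤ ⟪gy - gx, y - x⟫ := by
  have hderiv {z g : E} (hg : HasGradientAt f g z) :
      HasFDerivAt (fun w => f w - μ / 2 * ‖w‖ ^ 2)
        (toDual ℝ E g - (μ / 2) • (2 • innerSL ℝ z)) z :=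
    hg.hasFDerivAt.sub ((hasStrictFDerivAt_norm_sq z).hasFDerivAt.const_mul (μ / 2))
  have hmono :=
    (strongConvexOn_iff_convex.1 hf).hasFDerivAt_apply_sub_le hx hy (hderiv hgx) (hderiv hgy)
  simp only [sub_apply, toDual_apply_apply, smul_apply,
    coe_innerSL_apply, nsmul_eq_mul, Nat.cast_ofNat, smul_eq_mul] at hmono
  rw [inner_sub_left, ← real_inner_self_eq_norm_sq, inner_sub_left]
  linarith

theorem StrongConvexOn.mul_norm_sub_le_norm_sub
    (hf : StrongConvexOn s μ f) (hx : x ∈ s) (hy : y ∈ s) (hgx : HasGradientAt f gx x)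
    (hgy : HasGradientAt f gy y) : μ * ‖y - x‖ ≤ ‖gy - gx‖ := by
  rcases (norm_nonneg (y - x)).eq_or_lt with hxy | hxy
  · simp [← hxy]
  refine le_of_mul_le_mul_right ?_ hxy
  calc μ * ‖y - x‖ * ‖y - x‖ = μ * ‖y - x‖ ^ 2 := by ring
    _ ≤ ⟪gy - gx, y - x⟫ := hf.mul_norm_sq_le_inner_sub hx hy hgx hgy
    _ ≤ ‖gy - gx‖ * ‖y - x‖ := real_inner_le_norm _ _

end StrongConvexity

end InnerProduct

theorem norm_le_of_sum_eq_zero_of_norm_sub_le {ι E : Type*} [Fintype ι] [NormedAddCommGroup E]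
    [NormedSpace ℝ E] {v : ι → E} {K : ℝ} (hv : ∑ j, v j = 0) (i : ι)
    (hK : ∀ j, ‖v i - v j‖ ≤ K) : ‖v i‖ ≤ K := by
  have hcard : (0 : ℝ) < Fintype.card ι := by exact_mod_cast Fintype.card_pos_iff.2 ⟨i⟩
  have hsum : Fintype.card ι • v i = ∑ j, (v i - v j) := by
    rw [Finset.sum_sub_distrib, hv, sub_zero, Finset.sum_const, Finset.card_univ]
  refine le_of_mul_le_mul_left ?_ hcard
  calc (Fintype.card ι : ℝ) * ‖v i‖ = ‖Fintype.card ι • v i‖ := by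
        rw [← Nat.cast_smul_eq_nsmul ℝ, norm_smul, Real.norm_natCast]
    _ ≤ ∑ j, ‖v i - v j‖ := hsum ▸ norm_sum_le _ _
    _ ≤ Fintype.card ι * K := (Finset.sum_le_sum fun j _ => hK j).trans_eq (by simp)

theorem sum_minimizer_distance_le_general {d M : ℕ} (μ : ℝ) (hμ : 0 < μ)
    (f : Fin M → EuclideanSpace ℝ (Fin d) → ℝ)
    (hdiff : ∀ i, Differentiable ℝ (f i))
    (hsc : ∀ i, ConvexOn ℝ Set.univ (fun x => f i x - μ / 2 * ‖x‖ ^ 2))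
    (wi : Fin M → EuclideanSpace ℝ (Fin d))
    (hwi : ∀ i, ∀ z, f i (wi i) ≤ f i z)
    (wstar : EuclideanSpace ℝ (Fin d))
    (hwstar : ∀ z, (1 / (M : ℝ)) * ∑ i, f i wstar ≤ (1 / (M : ℝ)) * ∑ i, f i z)
    (Ω : Set (EuclideanSpace ℝ (Fin d)))
    (hΩstar : wstar ∈ Ω)
    (K : ℝ)
    (hbound : ∀ i j, ∀ x ∈ Ω, ‖gradient (f i) x - gradient (f j) x‖ ≤ K) :
    ∑ i, ‖wstar - wi i‖ ≤ (M : ℝ) / μ * K := by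
  have hgrad (i : Fin M) (x) : HasGradientAt (f i) (gradient (f i) x) x :=
    (hdiff i x).hasGradientAt
  have hdist (i : Fin M) : ‖wstar - wi i‖ ≤ K / μ := by
    have hM : (0 : ℝ) < M := by exact_mod_cast i.pos
    have hsum : ∑ j, gradient (f j) wstar = 0 :=
      IsLocalMin.hasGradientAt_eq_zero (f := fun x => ∑ j, f j x)
        (.of_forall fun z => le_of_mul_le_mul_left (hwstar z) (by positivity))
        (HasGradientAt.sum fun j _ => hgrad j wstar)
    have hmin : gradient (f i) (wi i) = 0 :=
      IsLocalMin.hasGradientAt_eq_zero (.of_forall (hwi i)) (hgrad i _)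
    rw [le_div_iff₀ hμ, mul_comm]
    calc μ * ‖wstar - wi i‖ ≤ ‖gradient (f i) wstar - gradient (f i) (wi i)‖ :=
          (strongConvexOn_iff_convex.2 (hsc i)).mul_norm_sub_le_norm_sub trivial trivial
            (hgrad i _) (hgrad i _)
      _ = ‖gradient (f i) wstar‖ := by rw [hmin, sub_zero]
      _ ≤ K := norm_le_of_sum_eq_zero_of_norm_sub_le hsum i fun j => hbound i j wstar hΩstar
  calc ∑ i, ‖wstar - wi i‖ ≤ ∑ _i : Fin M, K / μ := Finset.sum_le_sum fun i _ => hdist i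
    _ = (M : ℝ) / μ * K := by
      simp only [Finset.sum_const, Finset.card_univ, Fintype.card_fin, nsmul_eq_mul]
      ring

/-- Sum of distances between local and global minimizers: let `f₁, …, f_M : ℝ^d → ℝ`
(`M ≥ 1`) be differentiable and `μ`-strongly convex, `f := (1/M)∑ f_i`, let `w_i*`
be the global minimizer of `f_i`, `w*` the global minimizer of `f`, `Ω` a set
containing `w*` and every `w_i*`, and suppose `‖∇f_i(x) − ∇f_j(x)‖ ≤ K` for all
`i, j` and all `x ∈ Ω`. Then `∑_i ‖w* − w_i*‖ ≤ (M/μ)·K`. -/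
theorem sum_minimizer_distance_le {d M : ℕ} (hM : 1 ≤ M) (μ : ℝ) (hμ : 0 < μ)
    (f : Fin M → EuclideanSpace ℝ (Fin d) → ℝ)
    (hdiff : ∀ i, Differentiable ℝ (f i))
    (hsc : ∀ i, ConvexOn ℝ Set.univ (fun x => f i x - μ / 2 * ‖x‖ ^ 2))
    (wi : Fin M → EuclideanSpace ℝ (Fin d))
    (hwi : ∀ i, ∀ z, f i (wi i) ≤ f i z)
    (wstar : EuclideanSpace ℝ (Fin d))
    (hwstar : ∀ z, (1 / (M : ℝ)) * ∑ i, f i wstar ≤ (1 / (M : ℝ)) * ∑ i, f i z)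
    (Ω : Set (EuclideanSpace ℝ (Fin d)))
    (hΩstar : wstar ∈ Ω) (hΩi : ∀ i, wi i ∈ Ω)
    (K : ℝ) (hK : 0 ≤ K)
    (hbound : ∀ i j, ∀ x ∈ Ω, ‖gradient (f i) x - gradient (f j) x‖ ≤ K) :
    ∑ i, ‖wstar - wi i‖ ≤ (M : ℝ) / μ * K :=
  sum_minimizer_distance_le_general μ hμ f hdiff hsc wi hwi wstar hwstar Ω hΩstar K hbound
end

section
/- Let Q be a row stochastic M×M real matrix, let c ∈ ℝ^M, and let η ≥ 0 satisfy |Q_{ji} − c_i| ≤ η for all indices j, i. Let P := (1/M)·11ᵀ denote the exact averaging matrix. Then for any x, t ∈ ℝ^M and any h ≥ 0, the vector x⁺ := Qx − h·t satisfies ‖x⁺ − Px⁺‖ ≤ M^{3/2}·η·‖x − Px‖ + h·‖t − Pt‖. -/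
/-- The Euclidean norm of a vector in `ℝ^M`. -/
noncomputable def evnorm {M : ℕ} (v : Fin M → ℝ) : ℝ :=
  Real.sqrt (∑ i, v i ^ 2)

/-- The exact averaging matrix `P = (1/M)·11ᵀ`, all of whose entries are `1/M`. -/
noncomputable def avgMatrix (M : ℕ) : Matrix (Fin M) (Fin M) ℝ :=
  Matrix.of fun _ _ => 1 / (M : ℝ)

/-! The consensus error is `E = 1 - P`, which is linear, kills constant vectors and, being an
orthogonal projection, does not increase the norm. Writing `x = Ex + Px`, the constant vector
`Px` is fixed by `Q` and killed by `E`, and `Q - 1cᵀ` differs from `Q` by a map into constant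
vectors, so `E(Qx) = E((Q - 1cᵀ)(Ex))`. The entries of `Q - 1cᵀ` are bounded by `η`, so by
Cauchy–Schwarz its operator norm is at most its Frobenius norm `≤ Mη ≤ M^{3/2}η`. The `-h t`
term contributes `h‖Et‖` by linearity and the triangle inequality. -/

open Matrix Finset

section

variable {M : ℕ}

lemma evnorm_eq_norm (v : Fin M → ℝ) : evnorm v = ‖WithLp.toLp 2 v‖ := by
  simp [evnorm, EuclideanSpace.norm_eq, sq_abs]

lemma evnorm_sub_le (u v : Fin M → ℝ) : evnorm (u - v) ≤ evnorm u + evnorm v := by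
  simpa only [evnorm_eq_norm, WithLp.toLp_sub] using
    norm_sub_le (WithLp.toLp 2 u) (WithLp.toLp 2 v)

lemma evnorm_smul (a : ℝ) (v : Fin M → ℝ) : evnorm (a • v) = |a| * evnorm v := by
  simpa only [evnorm_eq_norm, WithLp.toLp_smul, Real.norm_eq_abs] using
    norm_smul a (WithLp.toLp 2 v)

lemma avgMatrix_mulVec (v : Fin M → ℝ) :
    avgMatrix M *ᵥ v = ((∑ i, v i) / M) • (1 : Fin M → ℝ) := by
  ext j
  simp [avgMatrix, mulVec, dotProduct, div_eq_inv_mul, ← mul_sum]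

lemma avgMatrix_mulVec_one (hM : 0 < M) : avgMatrix M *ᵥ (1 : Fin M → ℝ) = 1 := by
  rw [avgMatrix_mulVec]
  simp [hM.ne']

lemma sub_avgMatrix_mulVec (v : Fin M → ℝ) :
    v - avgMatrix M *ᵥ v = (1 - avgMatrix M) *ᵥ v := by
  rw [sub_mulVec, one_mulVec]

lemma one_sub_avgMatrix_mulVec_smul_one (hM : 0 < M) (a : ℝ) :
    (1 - avgMatrix M) *ᵥ (a • (1 : Fin M → ℝ)) = 0 := by
  rw [mulVec_smul, sub_mulVec, one_mulVec, avgMatrix_mulVec_one hM, sub_self, smul_zero]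

lemma evnorm_one_sub_avgMatrix_mulVec_le (hM : 0 < M) (v : Fin M → ℝ) :
    evnorm ((1 - avgMatrix M) *ᵥ v) ≤ evnorm v := by
  set m := (∑ i, v i) / M
  have hP : avgMatrix M *ᵥ v = m • 1 := avgMatrix_mulVec v
  have hsum : ∑ i, v i = M * m := (mul_div_cancel₀ _ (Nat.cast_ne_zero.2 hM.ne')).symm
  have hexpand : ∑ i, ((1 - avgMatrix M) *ᵥ v) i ^ 2 = ∑ i, v i ^ 2 - M * m ^ 2 := by
    simp only [sub_mulVec, one_mulVec, hP, Pi.sub_apply, Pi.smul_apply,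
      Pi.one_apply, smul_eq_mul, mul_one, sub_sq, sum_add_distrib, sum_sub_distrib,
      ← sum_mul, ← mul_sum, hsum, sum_const, card_univ, Fintype.card_fin, nsmul_eq_mul]
    ring
  refine Real.sqrt_le_sqrt ?_
  rw [hexpand]
  nlinarith [sq_nonneg m, (Nat.cast_nonneg M : (0 : ℝ) ≤ M)]

lemma one_sub_avgMatrix_mulVec_mulVec (hM : 0 < M) {Q : Matrix (Fin M) (Fin M) ℝ}
    (hQ : Q *ᵥ 1 = 1) (c x : Fin M → ℝ) :
    (1 - avgMatrix M) *ᵥ (Q *ᵥ x) =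
      (1 - avgMatrix M) *ᵥ ((Q - vecMulVec 1 c) *ᵥ ((1 - avgMatrix M) *ᵥ x)) := by
  have hx : x = (1 - avgMatrix M) *ᵥ x + ((∑ i, x i) / M) • 1 := by
    rw [← sub_avgMatrix_mulVec, avgMatrix_mulVec, sub_add_cancel]
  set y := (1 - avgMatrix M) *ᵥ x
  set m := (∑ i, x i) / M
  have hQx : Q *ᵥ x = (Q - vecMulVec 1 c) *ᵥ y + (c ⬝ᵥ y + m) • 1 := by
    conv_lhs => rw [hx]
    rw [mulVec_add, mulVec_smul, hQ, sub_mulVec, vecMulVec_mulVec, op_smul_eq_smul, add_smul]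
    abel
  rw [hQx, mulVec_add, one_sub_avgMatrix_mulVec_smul_one hM, add_zero]

end

lemma RowStochastic.mulVec_one {M : ℕ} {Q : Matrix (Fin M) (Fin M) ℝ} (hQ : RowStochastic Q) :
    Q *ᵥ 1 = 1 := by
  ext j
  simpa [mulVec, dotProduct] using hQ.2 j

lemma sum_sq_mulVec_le {m n : Type*} [Fintype m] [Fintype n] (A : Matrix m n ℝ) (y : n → ℝ) :
    ∑ j, (A *ᵥ y) j ^ 2 ≤ (∑ j, ∑ i, A j i ^ 2) * ∑ i, y i ^ 2 := by
  rw [sum_mul]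
  exact sum_le_sum fun j _ => sum_mul_sq_le_sq_mul_sq _ _ _

lemma evnorm_mulVec_le_of_abs_le {M : ℕ} {A : Matrix (Fin M) (Fin M) ℝ} {η : ℝ}
    (hη : 0 ≤ η) (hA : ∀ j i, |A j i| ≤ η) (y : Fin M → ℝ) :
    evnorm (A *ᵥ y) ≤ M * η * evnorm y := by
  have hfrob : ∑ j, ∑ i, A j i ^ 2 ≤ (M * η) ^ 2 := by
    calc ∑ j, ∑ i, A j i ^ 2 ≤ ∑ _j : Fin M, ∑ _i : Fin M, η ^ 2 :=
          sum_le_sum fun j _ => sum_le_sum fun i _ => sq_le_sq.2 ((hA j i).trans (le_abs_self η))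
      _ = (M * η) ^ 2 := by simp only [sum_const, card_univ, Fintype.card_fin, nsmul_eq_mul]; ring
  calc evnorm (A *ᵥ y) ≤ Real.sqrt ((M * η) ^ 2 * ∑ i, y i ^ 2) :=
        Real.sqrt_le_sqrt ((sum_sq_mulVec_le A y).trans
          (mul_le_mul_of_nonneg_right hfrob (sum_nonneg fun i _ => sq_nonneg _)))
    _ = M * η * evnorm y := by
        rw [Real.sqrt_mul (sq_nonneg _), Real.sqrt_sq (by positivity), evnorm]

/-- Contraction of the exact consensus error: let `Q` be row stochastic, `c ∈ ℝ^M`,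
and `η ≥ 0` with `|Q_{ji} − c_i| ≤ η` for all `j, i`. Let `P := (1/M)·11ᵀ`. Then for
any `x, t ∈ ℝ^M` and `h ≥ 0`, the vector `x⁺ := Qx − h·t` satisfies
`‖x⁺ − Px⁺‖ ≤ M^{3/2}·η·‖x − Px‖ + h·‖t − Pt‖`. -/
theorem exact_consensus_error_contraction {M : ℕ} (hM : 0 < M)
    (Q : Matrix (Fin M) (Fin M) ℝ) (hQ : RowStochastic Q)
    (c : Fin M → ℝ) (η : ℝ) (hη : 0 ≤ η)
    (hclose : ∀ j i, |Q j i - c i| ≤ η)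
    (x t : Fin M → ℝ) (h : ℝ) (hh : 0 ≤ h) :
    evnorm (Q.mulVec x - h • t - (avgMatrix M).mulVec (Q.mulVec x - h • t)) ≤
      (M : ℝ) ^ ((3 : ℝ) / 2) * η * evnorm (x - (avgMatrix M).mulVec x) +
        h * evnorm (t - (avgMatrix M).mulVec t) := by
  have hentries : ∀ j i, |(Q - vecMulVec 1 c : Matrix (Fin M) (Fin M) ℝ) j i| ≤ η := by
    simpa [vecMulVec_apply] using hclose
  have hQx : evnorm ((1 - avgMatrix M) *ᵥ (Q *ᵥ x)) ≤
      M * η * evnorm ((1 - avgMatrix M) *ᵥ x) := by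
    rw [one_sub_avgMatrix_mulVec_mulVec hM hQ.mulVec_one c]
    exact (evnorm_one_sub_avgMatrix_mulVec_le hM _).trans
      (evnorm_mulVec_le_of_abs_le hη hentries _)
  simp only [sub_avgMatrix_mulVec]
  calc evnorm ((1 - avgMatrix M) *ᵥ (Q *ᵥ x - h • t))
      ≤ evnorm ((1 - avgMatrix M) *ᵥ (Q *ᵥ x)) + h * evnorm ((1 - avgMatrix M) *ᵥ t) := by
        rw [mulVec_sub, mulVec_smul]
        exact (evnorm_sub_le _ _).trans_eq (by rw [evnorm_smul, abs_of_nonneg hh])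
    _ ≤ M * η * evnorm ((1 - avgMatrix M) *ᵥ x) + h * evnorm ((1 - avgMatrix M) *ᵥ t) := by
        gcongr
    _ ≤ (M : ℝ) ^ ((3 : ℝ) / 2) * η * evnorm ((1 - avgMatrix M) *ᵥ x) +
          h * evnorm ((1 - avgMatrix M) *ᵥ t) := by
        gcongr
        · exact Real.sqrt_nonneg _
        · exact Real.self_le_rpow_of_one_le (by exact_mod_cast hM) (by norm_num)
end
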